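/- arXiv:1403.6608 — 11 statements merged into one kernel-verified Lean document; each statement's English description precedes it below -/
import Mathlib

section
/- Fix β ∈ ℝ. Suppose h_N satisfies the LDP with respect to the prior measures P_N with rate function u ↦ −s(u), where s : ℝ → ℝ ∪ {−∞} is upper semicontinuous and not identically −∞, and suppose the moment condition lim_{L→∞} limsup_{N→∞} (1/N) ln ∫_{{ω : −β h_N(ω) ≥ L}} e^{−β N h_N(ω)} dP_N(ω) = −∞ holds. Then the canonical free energy exists and equals the Legendre–Fenchel transform of the entropy: lim_{N→∞} −(1/N) ln Z_N(β) = inf_{u ∈ ℝ} (β u − s(u)). -/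
/-!
STATEMENT 0: If the mean energies `h N` satisfy the LDP with respect to the prior
probability measures `P N` with rate function `u ↦ -s u` (with `s` upper semicontinuous,
not identically `⊥`), and the Varadhan moment condition holds for `F = -β h`, then the
canonical free energy `φ(β) = lim -(1/N) ln Z_N(β)` exists, is finite, and equals the
Legendre–Fenchel transform `inf_u (β u - s u)` of the entropy.

The LDP is encoded in the standard "eventually" form, equivalent to the limsup/liminf
form: for closed `C`, `limsup (1/N) ln Q_N{X_N ∈ C} ≤ -inf_C I` iff for every real
`c < inf_C I` eventually `Q_N{X_N ∈ C} ≤ exp (-N c)`, and similarly for open sets.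
Likewise, `lim_{L→∞} limsup_N (1/N) ln ∫_{{-β h_N ≥ L}} e^{-β N h_N} dP_N = -∞` is
encoded as: for every `M`, eventually in `L`, eventually in `N`, the integral is
`≤ exp (-N M)`.
-/

open MeasureTheory Filter Set Topology
open scoped ENNReal

lemma aux_lintegral_le_sum_of_cover {α : Type*} [MeasurableSpace α] (μ : Measure α)
    (f : α → ℝ≥0∞) (K : ℕ) (T : ℕ → Set α) (hcov : ∀ x, ∃ i, i < K ∧ x ∈ T i) :
    ∫⁻ x, f x ∂μ ≤ ∑ i ∈ Finset.range K, ∫⁻ x in T i, f x ∂μ := by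
  classical
  set T' : ℕ → Set α := fun i => if i < K then T i else ∅ with hT'
  have hsub : (Set.univ : Set α) ⊆ ⋃ i, T' i := by
    intro x _
    obtain ⟨i, hiK, hx⟩ := hcov x
    exact Set.mem_iUnion.2 ⟨i, by simp [T', hiK, hx]⟩
  calc ∫⁻ x, f x ∂μ = ∫⁻ x in Set.univ, f x ∂μ := by rw [Measure.restrict_univ]
    _ ≤ ∫⁻ x in ⋃ i, T' i, f x ∂μ :=
        lintegral_mono' (Measure.restrict_mono hsub le_rfl) le_rfl
    _ ≤ ∑' i, ∫⁻ x in T' i, f x ∂μ := lintegral_iUnion_le _ _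
    _ = ∑ i ∈ Finset.range K, ∫⁻ x in T' i, f x ∂μ := by
        refine tsum_eq_sum ?_
        intro i hi
        simp only [Finset.mem_range, not_lt] at hi
        simp [T', Nat.not_lt.2 hi]
    _ = ∑ i ∈ Finset.range K, ∫⁻ x in T i, f x ∂μ := by
        refine Finset.sum_congr rfl fun i hi => ?_
        simp [T', Finset.mem_range.1 hi]

/-- The large deviation principle for a sequence of random variables `X N` with respect to
probability measures `Q N`, at speed `N`, with rate function `I : E → [0,∞]`
(lower semicontinuous, nonnegative). -/
structure IsLDP {Ω : ℕ → Type*} [∀ N, MeasurableSpace (Ω N)] {E : Type*}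
    [TopologicalSpace E] (Q : ∀ N, Measure (Ω N)) (X : ∀ N, Ω N → E)
    (I : E → EReal) : Prop where
  nonneg : ∀ x, 0 ≤ I x
  lsc : LowerSemicontinuous I
  upper : ∀ C : Set E, IsClosed C → ∀ c : ℝ, (c : EReal) < ⨅ x ∈ C, I x →
    ∀ᶠ N : ℕ in atTop, Q N {ω | X N ω ∈ C} ≤ ENNReal.ofReal (Real.exp (-(N : ℝ) * c))
  lower : ∀ O : Set E, IsOpen O → ∀ c : ℝ, (⨅ x ∈ O, I x) < (c : EReal) →
    ∀ᶠ N : ℕ in atTop, ENNReal.ofReal (Real.exp (-(N : ℝ) * c)) ≤ Q N {ω | X N ω ∈ O}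

theorem free_energy_exists_and_is_legendre_fenchel_transform_of_entropy
    {Ω : ℕ → Type*} [∀ N, MeasurableSpace (Ω N)]
    (P : ∀ N, Measure (Ω N)) [∀ N, IsProbabilityMeasure (P N)]
    (h : ∀ N, Ω N → ℝ) (hmeas : ∀ N, Measurable (h N))
    (β : ℝ) (s : ℝ → EReal)
    (husc : UpperSemicontinuous s)
    (hne : ∃ u : ℝ, s u ≠ ⊥)
    (hLDP : IsLDP P h fun u => -(s u))
    (hmoment : ∀ M : ℝ, ∀ᶠ L in (atTop : Filter ℝ), ∀ᶠ N : ℕ in atTop,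
      (∫⁻ ω in {ω | L ≤ -(β * h N ω)},
          ENNReal.ofReal (Real.exp (-(β * (N : ℝ) * h N ω))) ∂(P N))
        ≤ ENNReal.ofReal (Real.exp (-(N : ℝ) * M))) :
    ∃ φβ : ℝ,
      (⨅ u : ℝ, ((β * u : ℝ) : EReal) - s u) = (φβ : EReal) ∧
      Tendsto
        (fun N : ℕ => -((N : ℝ)⁻¹ *
          Real.log ((∫⁻ ω, ENNReal.ofReal (Real.exp (-(β * (N : ℝ) * h N ω))) ∂(P N)).toReal)))
        atTop (𝓝 φβ) := by
  classical
  set Z : ℕ → ℝ≥0∞ :=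
    fun N => ∫⁻ ω, ENNReal.ofReal (Real.exp (-(β * (N : ℝ) * h N ω))) ∂(P N) with hZdef
  -- basic facts about s
  have hs_ne_top : ∀ u, s u ≠ ⊤ := by
    intro u hu
    have h0 := hLDP.nonneg u
    rw [hu] at h0
    simp at h0
  -- per-piece upper bound
  have hpiece : ∀ (N : ℕ) (S : Set (Ω N)), MeasurableSet S → ∀ b : ℝ,
      (∀ ω ∈ S, -(β * h N ω) ≤ b) →
      ∫⁻ ω in S, ENNReal.ofReal (Real.exp (-(β * (N : ℝ) * h N ω))) ∂(P N)
        ≤ ENNReal.ofReal (Real.exp ((N : ℝ) * b)) * (P N) S := by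
    intro N S hS b hb
    calc ∫⁻ ω in S, ENNReal.ofReal (Real.exp (-(β * (N : ℝ) * h N ω))) ∂(P N)
        ≤ ∫⁻ _ω in S, ENNReal.ofReal (Real.exp ((N : ℝ) * b)) ∂(P N) := by
          refine setLIntegral_mono' hS fun ω hω => ?_
          refine ENNReal.ofReal_le_ofReal (Real.exp_le_exp.2 ?_)
          have h1 := hb ω hω
          have h2 : (0 : ℝ) ≤ (N : ℝ) := Nat.cast_nonneg N
          nlinarith
      _ = ENNReal.ofReal (Real.exp ((N : ℝ) * b)) * (P N) S := setLIntegral_const S _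
  -- lower bound lemma (Lemma A)
  have hlow : ∀ (u t : ℝ), s u = (t : EReal) → ∀ ε : ℝ, 0 < ε →
      ∀ᶠ N : ℕ in atTop,
        ENNReal.ofReal (Real.exp ((N : ℝ) * (-(β * u) + t - ε))) ≤ Z N := by
    intro u t hut ε hε
    set ε' : ℝ := ε / (2 * (|β| + 1)) with hε'def
    have hε'pos : 0 < ε' := by positivity
    have hβε' : |β| * ε' ≤ ε / 2 := by
      rw [← mul_div_assoc, div_le_div_iff₀ (by positivity) two_pos]
      nlinarith [abs_nonneg β, hε.le]
    have h_inf_lt : (⨅ x ∈ Metric.ball u ε', -(s x)) < ((-t + ε / 2 : ℝ) : EReal) := by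
      refine lt_of_le_of_lt (iInf₂_le u (Metric.mem_ball_self hε'pos)) ?_
      rw [hut, ← EReal.coe_neg]
      exact EReal.coe_lt_coe_iff.2 (by linarith)
    filter_upwards [hLDP.lower (Metric.ball u ε') Metric.isOpen_ball (-t + ε / 2) h_inf_lt]
      with N hN
    have hset : MeasurableSet {ω | h N ω ∈ Metric.ball u ε'} :=
      (hmeas N) Metric.isOpen_ball.measurableSet
    have hNn : (0 : ℝ) ≤ (N : ℝ) := Nat.cast_nonneg N
    calc ENNReal.ofReal (Real.exp ((N : ℝ) * (-(β * u) + t - ε)))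
        ≤ ENNReal.ofReal (Real.exp ((N : ℝ) * (-(β * u) - |β| * ε'))) *
            ENNReal.ofReal (Real.exp (-(N : ℝ) * (-t + ε / 2))) := by
          rw [← ENNReal.ofReal_mul (Real.exp_nonneg _), ← Real.exp_add]
          refine ENNReal.ofReal_le_ofReal (Real.exp_le_exp.2 ?_)
          nlinarith
      _ ≤ ENNReal.ofReal (Real.exp ((N : ℝ) * (-(β * u) - |β| * ε'))) *
            P N {ω | h N ω ∈ Metric.ball u ε'} := mul_le_mul_right hN _
      _ = ∫⁻ _ω in {ω | h N ω ∈ Metric.ball u ε'},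
            ENNReal.ofReal (Real.exp ((N : ℝ) * (-(β * u) - |β| * ε'))) ∂(P N) :=
          (setLIntegral_const _ _).symm
      _ ≤ ∫⁻ ω in {ω | h N ω ∈ Metric.ball u ε'},
            ENNReal.ofReal (Real.exp (-(β * (N : ℝ) * h N ω))) ∂(P N) := by
          refine setLIntegral_mono' hset fun ω hω => ?_
          refine ENNReal.ofReal_le_ofReal (Real.exp_le_exp.2 ?_)
          have hd : |h N ω - u| < ε' := by
            have hh := hω
            simp only [Set.mem_setOf_eq, Metric.mem_ball, Real.dist_eq] at hh
            exact hh
          have h1 : β * (h N ω - u) ≤ |β| * |h N ω - u| := by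
            calc β * (h N ω - u) ≤ |β * (h N ω - u)| := le_abs_self _
              _ = |β| * |h N ω - u| := abs_mul _ _
          have h2 : |h N ω - u| ≤ ε' := hd.le
          have key : -(β * u) - |β| * ε' ≤ -(β * h N ω) := by
            nlinarith [mul_le_mul_of_nonneg_left h2 (abs_nonneg β)]
          nlinarith [mul_le_mul_of_nonneg_left key hNn]
      _ ≤ Z N := lintegral_mono' Measure.restrict_le_self le_rfl
  -- crude upper bound
  have hcrude : ∃ R : ℝ, ∀ᶠ N : ℕ in atTop, Z N ≤ ENNReal.ofReal (Real.exp ((N : ℝ) * R)) := by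
    obtain ⟨L₀, hL₀⟩ := (hmoment 0).exists
    refine ⟨max L₀ 0 + 1, ?_⟩
    filter_upwards [hL₀, eventually_ge_atTop 1] with N hN hN1
    have hFmeas : Measurable fun ω => -(β * h N ω) := ((hmeas N).const_mul β).neg
    set T : ℕ → Set (Ω N) := fun i =>
      if i = 0 then {ω | L₀ ≤ -(β * h N ω)} else {ω | -(β * h N ω) ≤ L₀} with hT
    have hcov : ∀ ω, ∃ i, i < 2 ∧ ω ∈ T i := by
      intro ω
      rcases le_total L₀ (-(β * h N ω)) with hc | hc
      · exact ⟨0, by norm_num, by simp [T, hc]⟩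
      · exact ⟨1, by norm_num, by simp [T, hc]⟩
    have hNn : (0 : ℝ) ≤ (N : ℝ) := Nat.cast_nonneg N
    have hN1' : (1 : ℝ) ≤ (N : ℝ) := by exact_mod_cast hN1
    calc Z N ≤ ∑ i ∈ Finset.range 2,
          ∫⁻ ω in T i, ENNReal.ofReal (Real.exp (-(β * (N : ℝ) * h N ω))) ∂(P N) :=
          aux_lintegral_le_sum_of_cover _ _ 2 T hcov
      _ = (∫⁻ ω in T 0, ENNReal.ofReal (Real.exp (-(β * (N : ℝ) * h N ω))) ∂(P N)) +
          ∫⁻ ω in T 1, ENNReal.ofReal (Real.exp (-(β * (N : ℝ) * h N ω))) ∂(P N) := by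
          rw [Finset.sum_range_succ, Finset.sum_range_one]
      _ ≤ ENNReal.ofReal (Real.exp (-(N : ℝ) * 0)) +
          ENNReal.ofReal (Real.exp ((N : ℝ) * L₀)) * (P N) (T 1) := by
          refine add_le_add ?_ ?_
          · have hT0 : T 0 = {ω | L₀ ≤ -(β * h N ω)} := by simp [T]
            rw [hT0]; exact hN
          · refine hpiece N (T 1) ?_ L₀ ?_
            · have hT1 : T 1 = (fun ω => -(β * h N ω)) ⁻¹' Set.Iic L₀ := by
                simp [T, Set.preimage, Set.mem_Iic]
              rw [hT1]; exact hFmeas measurableSet_Iic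
            · intro ω hω; simpa [T] using hω
      _ ≤ ENNReal.ofReal 1 + ENNReal.ofReal (Real.exp ((N : ℝ) * L₀)) * 1 := by
          refine add_le_add ?_ (mul_le_mul_right prob_le_one _)
          simp
      _ ≤ ENNReal.ofReal (Real.exp ((N : ℝ) * (max L₀ 0 + 1))) := by
          rw [mul_one, ← ENNReal.ofReal_add one_pos.le (Real.exp_nonneg _)]
          refine ENNReal.ofReal_le_ofReal ?_
          have e1 : (1 : ℝ) ≤ Real.exp ((N : ℝ) * max L₀ 0) :=
            Real.one_le_exp (by positivity)
          have e2 : Real.exp ((N : ℝ) * L₀) ≤ Real.exp ((N : ℝ) * max L₀ 0) :=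
            Real.exp_le_exp.2 (mul_le_mul_of_nonneg_left (le_max_left _ _) hNn)
          have e3 : (2 : ℝ) ≤ Real.exp (N : ℝ) := by
            have e5 := Real.add_one_le_exp (1 : ℝ)
            have h4 : Real.exp 1 ≤ Real.exp (N : ℝ) := Real.exp_le_exp.2 hN1'
            linarith
          have e4 : Real.exp ((N : ℝ) * (max L₀ 0 + 1)) =
              Real.exp ((N : ℝ) * max L₀ 0) * Real.exp (N : ℝ) := by
            rw [← Real.exp_add]; ring_nf
          rw [e4]
          nlinarith [Real.exp_pos ((N : ℝ) * max L₀ 0)]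
  -- exponent comparison
  have hcmp : ∀ a b : ℝ,
      (∀ᶠ N : ℕ in atTop, ENNReal.ofReal (Real.exp ((N : ℝ) * a))
        ≤ ENNReal.ofReal (Real.exp ((N : ℝ) * b))) → a ≤ b := by
    intro a b hab
    obtain ⟨N, hN1, hN⟩ := ((eventually_ge_atTop 1).and hab).exists
    have h1 : Real.exp ((N : ℝ) * a) ≤ Real.exp ((N : ℝ) * b) :=
      (ENNReal.ofReal_le_ofReal_iff (Real.exp_pos _).le).1 hN
    have h2 : (N : ℝ) * a ≤ (N : ℝ) * b := Real.exp_le_exp.1 h1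
    have h3 : (0 : ℝ) < (N : ℝ) := by exact_mod_cast hN1
    exact le_of_mul_le_mul_left h2 h3
  obtain ⟨R, hR⟩ := hcrude
  -- Λ is finite
  have hΛ_ge : ((-R - 1 : ℝ) : EReal) ≤ ⨅ u : ℝ, ((β * u : ℝ) : EReal) - s u := by
    refine le_iInf fun u => ?_
    by_cases hu : s u = ⊥
    · rw [hu, EReal.coe_sub_bot]; exact le_top
    · have hut : s u = ((s u).toReal : EReal) := (EReal.coe_toReal (hs_ne_top u) hu).symm
      set t := (s u).toReal
      have hab : -(β * u) + t - 1 ≤ R := by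
        refine hcmp _ _ ?_
        filter_upwards [hlow u t hut 1 one_pos, hR] with N h1 h2 using le_trans h1 h2
      rw [hut, ← EReal.coe_sub]
      exact EReal.coe_le_coe_iff.2 (by linarith)
  have hΛ_ne_bot : (⨅ u : ℝ, ((β * u : ℝ) : EReal) - s u) ≠ ⊥ :=
    ((EReal.bot_lt_coe _).trans_le hΛ_ge).ne'
  have hΛ_ne_top : (⨅ u : ℝ, ((β * u : ℝ) : EReal) - s u) ≠ ⊤ := by
    obtain ⟨u₀, hu₀⟩ := hne
    have hut : s u₀ = ((s u₀).toReal : EReal) := (EReal.coe_toReal (hs_ne_top u₀) hu₀).symm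
    refine ne_top_of_le_ne_top ?_ (iInf_le _ u₀)
    rw [hut, ← EReal.coe_sub]
    exact EReal.coe_ne_top _
  set φ : ℝ := (⨅ u : ℝ, ((β * u : ℝ) : EReal) - s u).toReal with hφdef
  have hφΛ : (⨅ u : ℝ, ((β * u : ℝ) : EReal) - s u) = (φ : EReal) :=
    (EReal.coe_toReal hΛ_ne_top hΛ_ne_bot).symm
  have hφ_le : ∀ u : ℝ, (φ : EReal) ≤ ((β * u : ℝ) : EReal) - s u :=
    fun u => hφΛ ▸ iInf_le _ u
  -- Varadhan upper bound (Lemma B)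
  have hupper : ∀ ε : ℝ, 0 < ε → ∀ᶠ N : ℕ in atTop,
      Z N ≤ ENNReal.ofReal (Real.exp ((N : ℝ) * (-φ + ε))) := by
    intro ε hε
    obtain ⟨L, hLmom⟩ := (hmoment (φ - ε / 2)).exists
    obtain ⟨K, hKdef⟩ : ∃ K : ℕ, K = ⌈(L - (-φ + ε / 2)) / (ε / 4)⌉₊ := ⟨_, rfl⟩
    -- middle closed-set measure bounds
    have hmid : ∀ j : ℕ, ∀ᶠ N : ℕ in atTop,
        P N {ω | h N ω ∈ (fun x : ℝ => -(β * x)) ⁻¹'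
          Set.Icc (-φ + ε / 2 + (j : ℝ) * (ε / 4)) (-φ + ε / 2 + (j : ℝ) * (ε / 4) + ε / 4)}
        ≤ ENNReal.ofReal (Real.exp (-(N : ℝ) * (ε / 4 + (j : ℝ) * (ε / 4)))) := by
      intro j
      refine hLDP.upper _ (isClosed_Icc.preimage (by fun_prop)) _ ?_
      have hge : ∀ x ∈ (fun x : ℝ => -(β * x)) ⁻¹'
          Set.Icc (-φ + ε / 2 + (j : ℝ) * (ε / 4)) (-φ + ε / 2 + (j : ℝ) * (ε / 4) + ε / 4),
          ((ε / 2 + (j : ℝ) * (ε / 4) : ℝ) : EReal) ≤ -(s x) := by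
        intro x hx
        obtain ⟨hx1, _⟩ := hx
        by_cases hb : s x = ⊥
        · rw [hb, EReal.neg_bot]; exact le_top
        · have hut : s x = ((s x).toReal : EReal) := (EReal.coe_toReal (hs_ne_top x) hb).symm
          have h1 := hφ_le x
          rw [hut, ← EReal.coe_sub] at h1
          have h1' : φ ≤ β * x - (s x).toReal := EReal.coe_le_coe_iff.1 h1
          rw [hut, ← EReal.coe_neg]
          exact EReal.coe_le_coe_iff.2 (by linarith)
      refine lt_of_lt_of_le ?_ (le_iInf₂ hge)
      exact EReal.coe_lt_coe_iff.2 (by linarith)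
    have hmid_all : ∀ᶠ N : ℕ in atTop, ∀ j ∈ Finset.range K,
        P N {ω | h N ω ∈ (fun x : ℝ => -(β * x)) ⁻¹'
          Set.Icc (-φ + ε / 2 + (j : ℝ) * (ε / 4)) (-φ + ε / 2 + (j : ℝ) * (ε / 4) + ε / 4)}
        ≤ ENNReal.ofReal (Real.exp (-(N : ℝ) * (ε / 4 + (j : ℝ) * (ε / 4)))) :=
      (eventually_all_finset _).2 fun j _ => hmid j
    have hgrow : ∀ᶠ N : ℕ in atTop, ((K : ℝ) + 2) ≤ Real.exp ((N : ℝ) * (ε / 2)) := by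
      have h1 : Tendsto (fun N : ℕ => (N : ℝ) * (ε / 2)) atTop atTop :=
        tendsto_natCast_atTop_atTop.atTop_mul_const (by positivity)
      exact (Real.tendsto_exp_atTop.comp h1).eventually_ge_atTop _
    filter_upwards [hLmom, hmid_all, hgrow] with N hN_tail hN_mid hN_grow
    classical
    have hFmeas : Measurable fun ω => -(β * h N ω) := ((hmeas N).const_mul β).neg
    set T : ℕ → Set (Ω N) := fun i =>
      if i = 0 then {ω | L ≤ -(β * h N ω)}
      else if i = 1 then {ω | -(β * h N ω) ≤ -φ + ε / 2}
      else {ω | -(β * h N ω) ∈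
        Set.Icc (-φ + ε / 2 + ((i - 2 : ℕ) : ℝ) * (ε / 4))
          (-φ + ε / 2 + ((i - 2 : ℕ) : ℝ) * (ε / 4) + ε / 4)} with hT
    have e4 : (0 : ℝ) < ε / 4 := by linarith
    have hcov : ∀ ω, ∃ i, i < K + 2 ∧ ω ∈ T i := by
      intro ω
      by_cases hc1 : L ≤ -(β * h N ω)
      · exact ⟨0, by omega, by simp [T, hc1]⟩
      by_cases hc2 : -(β * h N ω) ≤ -φ + ε / 2
      · exact ⟨1, by omega, by simp [T]; linarith⟩
      push_neg at hc1 hc2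
      obtain ⟨j, hjdef⟩ : ∃ j : ℕ, j = ⌊(-(β * h N ω) - (-φ + ε / 2)) / (ε / 4)⌋₊ := ⟨_, rfl⟩
      have hnum : (0 : ℝ) ≤ (-(β * h N ω) - (-φ + ε / 2)) / (ε / 4) :=
        div_nonneg (by linarith) e4.le
      have hj1 : (j : ℝ) ≤ (-(β * h N ω) - (-φ + ε / 2)) / (ε / 4) := by
        rw [hjdef]; exact Nat.floor_le hnum
      have hj2 : (-(β * h N ω) - (-φ + ε / 2)) / (ε / 4) < (j : ℝ) + 1 := by
        rw [hjdef]; exact Nat.lt_floor_add_one _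
      have hj1' : (j : ℝ) * (ε / 4) ≤ -(β * h N ω) - (-φ + ε / 2) := (le_div_iff₀ e4).1 hj1
      have hj2' : -(β * h N ω) - (-φ + ε / 2) < ((j : ℝ) + 1) * (ε / 4) := (div_lt_iff₀ e4).1 hj2
      have hjK : j < K := by
        have hcast : (j : ℝ) < (K : ℝ) := by
          have hK_ge : (L - (-φ + ε / 2)) / (ε / 4) ≤ (K : ℝ) := by
            rw [hKdef]; exact Nat.le_ceil _
          have hstep : (-(β * h N ω) - (-φ + ε / 2)) / (ε / 4)
              < (L - (-φ + ε / 2)) / (ε / 4) := by gcongr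
          linarith
        exact_mod_cast hcast
      refine ⟨j + 2, by omega, ?_⟩
      have : T (j + 2) = {ω | -(β * h N ω) ∈
          Set.Icc (-φ + ε / 2 + (j : ℝ) * (ε / 4))
            (-φ + ε / 2 + (j : ℝ) * (ε / 4) + ε / 4)} := by
        simp [T]
      rw [this]
      exact ⟨by linarith, by linarith⟩
    calc Z N ≤ ∑ i ∈ Finset.range (K + 2),
          ∫⁻ ω in T i, ENNReal.ofReal (Real.exp (-(β * (N : ℝ) * h N ω))) ∂(P N) := by
          rw [hZdef]
          exact aux_lintegral_le_sum_of_cover _ _ (K + 2) T hcov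
      _ ≤ (Finset.range (K + 2)).card • ENNReal.ofReal (Real.exp ((N : ℝ) * (-φ + ε / 2))) := by
          refine Finset.sum_le_card_nsmul _ _ _ ?_
          intro i _hi
          match i, _hi with
          | 0, _ =>
            have hT0 : T 0 = {ω | L ≤ -(β * h N ω)} := by simp [T]
            rw [hT0]
            refine le_trans hN_tail (le_of_eq ?_)
            congr 1
            ring_nf
          | 1, _ =>
            have hT1 : T 1 = {ω | -(β * h N ω) ≤ -φ + ε / 2} := by simp [T]
            have hmT1 : MeasurableSet (T 1) := by
              rw [hT1]
              exact hFmeas measurableSet_Iic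
            calc ∫⁻ ω in T 1, ENNReal.ofReal (Real.exp (-(β * (N : ℝ) * h N ω))) ∂(P N)
                ≤ ENNReal.ofReal (Real.exp ((N : ℝ) * (-φ + ε / 2))) * (P N) (T 1) := by
                  refine hpiece N (T 1) hmT1 _ ?_
                  intro ω hω
                  rw [hT1] at hω
                  exact hω
              _ ≤ ENNReal.ofReal (Real.exp ((N : ℝ) * (-φ + ε / 2))) * 1 :=
                  mul_le_mul_right prob_le_one _
              _ = ENNReal.ofReal (Real.exp ((N : ℝ) * (-φ + ε / 2))) := mul_one _
          | (j + 2), hi =>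
            have hjK : j < K := by
              have := Finset.mem_range.1 hi; omega
            have hTj : T (j + 2) = {ω | h N ω ∈ (fun x : ℝ => -(β * x)) ⁻¹'
                Set.Icc (-φ + ε / 2 + (j : ℝ) * (ε / 4))
                  (-φ + ε / 2 + (j : ℝ) * (ε / 4) + ε / 4)} := by
              simp [T, Set.preimage]
            have hmTj : MeasurableSet (T (j + 2)) := by
              rw [hTj]
              exact (hmeas N) ((isClosed_Icc.preimage (by fun_prop : Continuous
                fun x : ℝ => -(β * x))).measurableSet)
            calc ∫⁻ ω in T (j + 2), ENNReal.ofReal (Real.exp (-(β * (N : ℝ) * h N ω))) ∂(P N)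
                ≤ ENNReal.ofReal
                    (Real.exp ((N : ℝ) * (-φ + ε / 2 + (j : ℝ) * (ε / 4) + ε / 4)))
                    * (P N) (T (j + 2)) := by
                  refine hpiece N _ hmTj _ ?_
                  intro ω hω
                  rw [hTj] at hω
                  exact hω.2
              _ ≤ ENNReal.ofReal
                    (Real.exp ((N : ℝ) * (-φ + ε / 2 + (j : ℝ) * (ε / 4) + ε / 4)))
                    * ENNReal.ofReal (Real.exp (-(N : ℝ) * (ε / 4 + (j : ℝ) * (ε / 4)))) := by
                  refine mul_le_mul_right ?_ _
                  rw [hTj]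
                  exact hN_mid j (Finset.mem_range.2 hjK)
              _ = ENNReal.ofReal (Real.exp ((N : ℝ) * (-φ + ε / 2))) := by
                  rw [← ENNReal.ofReal_mul (Real.exp_nonneg _), ← Real.exp_add]
                  congr 2
                  ring
      _ ≤ ENNReal.ofReal (Real.exp ((N : ℝ) * (-φ + ε))) := by
          rw [Finset.card_range, nsmul_eq_mul]
          have hKcast : ((K + 2 : ℕ) : ℝ≥0∞) = ENNReal.ofReal ((K : ℝ) + 2) := by
            rw [← ENNReal.ofReal_natCast]
            congr 1
            push_cast
            ring
          rw [hKcast, ← ENNReal.ofReal_mul (by positivity)]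
          refine ENNReal.ofReal_le_ofReal ?_
          have hsplit : Real.exp ((N : ℝ) * (-φ + ε)) =
              Real.exp ((N : ℝ) * (ε / 2)) * Real.exp ((N : ℝ) * (-φ + ε / 2)) := by
            rw [← Real.exp_add]; ring_nf
          rw [hsplit]
          exact mul_le_mul_of_nonneg_right hN_grow (Real.exp_nonneg _)
  -- conclusion
  refine ⟨φ, hφΛ, ?_⟩
  rw [Metric.tendsto_atTop]
  intro ε hε
  -- choose u close to the infimum
  have hlt : (⨅ u : ℝ, ((β * u : ℝ) : EReal) - s u) < ((φ + ε / 2 : ℝ) : EReal) := by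
    rw [hφΛ]; exact EReal.coe_lt_coe_iff.2 (by linarith)
  obtain ⟨u, hu⟩ := iInf_lt_iff.1 hlt
  have hsu_ne_bot : s u ≠ ⊥ := by
    intro hb
    rw [hb, EReal.coe_sub_bot] at hu
    exact (not_top_lt hu)
  have hut : s u = ((s u).toReal : EReal) := (EReal.coe_toReal (hs_ne_top u) hsu_ne_bot).symm
  set t := (s u).toReal
  rw [hut, ← EReal.coe_sub] at hu
  have hu' : β * u - t < φ + ε / 2 := EReal.coe_lt_coe_iff.1 hu
  obtain ⟨N₀, hN₀⟩ := eventually_atTop.1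
    (((hlow u t hut (ε / 2) (by linarith)).and (hupper (ε / 2) (by linarith))).and
      (eventually_ge_atTop 1))
  refine ⟨N₀, fun n hn => ?_⟩
  obtain ⟨⟨hA, hB⟩, hn1⟩ := hN₀ n hn
  have hn0 : (0 : ℝ) < (n : ℝ) := by exact_mod_cast hn1
  have hZ_ne_top : Z n ≠ ⊤ := (lt_of_le_of_lt hB ENNReal.ofReal_lt_top).ne
  have h1 : Real.exp ((n : ℝ) * (-(β * u) + t - ε / 2)) ≤ (Z n).toReal :=
    (ENNReal.ofReal_le_iff_le_toReal hZ_ne_top).1 hA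
  have h2 : (Z n).toReal ≤ Real.exp ((n : ℝ) * (-φ + ε / 2)) :=
    ENNReal.toReal_le_of_le_ofReal (Real.exp_nonneg _) hB
  have hpos : 0 < (Z n).toReal := lt_of_lt_of_le (Real.exp_pos _) h1
  have hlog1 : (n : ℝ) * (-(β * u) + t - ε / 2) ≤ Real.log (Z n).toReal :=
    (Real.le_log_iff_exp_le hpos).2 h1
  have hlog2 : Real.log (Z n).toReal ≤ (n : ℝ) * (-φ + ε / 2) :=
    (Real.log_le_iff_le_exp hpos).2 h2
  have hx1 : -(β * u) + t - ε / 2 ≤ (n : ℝ)⁻¹ * Real.log (Z n).toReal := by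
    have hm := mul_le_mul_of_nonneg_left hlog1 (inv_nonneg.2 hn0.le)
    rwa [← mul_assoc, inv_mul_cancel₀ hn0.ne', one_mul] at hm
  have hx2 : (n : ℝ)⁻¹ * Real.log (Z n).toReal ≤ -φ + ε / 2 := by
    have hm := mul_le_mul_of_nonneg_left hlog2 (inv_nonneg.2 hn0.le)
    rwa [← mul_assoc, inv_mul_cancel₀ hn0.ne', one_mul] at hm
  rw [Real.dist_eq, abs_lt]
  constructor <;> [linarith; linarith]
end

section
/- Fix β ∈ ℝ. Suppose h_N satisfies the LDP with respect to the prior measures P_N with rate function u ↦ −s(u), where s : ℝ → ℝ ∪ {−∞} is upper semicontinuous and not identically −∞; suppose the moment condition lim_{L→∞} limsup_{N→∞} (1/N) ln ∫_{{ω : −β h_N(ω) ≥ L}} e^{−β N h_N(ω)} dP_N(ω) = −∞ holds; and suppose φ(β) = inf_{v ∈ ℝ} (β v − s(v)) is finite. Then h_N satisfies the LDP with respect to the canonical ensembles P_{N,β} with rate function J_β(u) = β u − s(u) − φ(β) (with J_β(u) = +∞ where s(u) = −∞). -/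
/-!
The canonical ensemble is the prior reweighted by `e^{N F(h_N)}`, `F u = -β u`, and normalized
by its total mass `Z_N`. The reweighted measures obey LDP-type bounds with the unnormalized rate
`I - F = β u - s u`; on the whole space these give `Z_N ≈ e^{-N φ(β)}`, so dividing by `Z_N`
subtracts `φ(β)`. The lower bound is local: near a point `x₀` the weight is almost
`e^{N F x₀}`. For the upper bound the closed set is cut into finitely many slabs on which `F`
varies by at most `δ`; the moment condition controls the region where `F` is large, the weight
itself is small where `F` is very negative, and finitely many pieces of the same exponential order
do not change that order.
-/

open MeasureTheory Filter Set Topology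
open scoped ENNReal

namespace ENNReal

lemma ofReal_exp_add (x y : ℝ) :
    ENNReal.ofReal (Real.exp (x + y)) =
      ENNReal.ofReal (Real.exp x) * ENNReal.ofReal (Real.exp y) := by
  rw [Real.exp_add, ofReal_mul (Real.exp_nonneg x)]

lemma ofReal_exp_neg (x : ℝ) :
    ENNReal.ofReal (Real.exp (-x)) = (ENNReal.ofReal (Real.exp x))⁻¹ := by
  rw [Real.exp_neg, ofReal_inv_of_pos (Real.exp_pos x)]

lemma ofReal_exp_le_ofReal_exp {x y : ℝ} :
    ENNReal.ofReal (Real.exp x) ≤ ENNReal.ofReal (Real.exp y) ↔ x ≤ y := by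
  rw [ofReal_le_ofReal_iff (Real.exp_nonneg y), Real.exp_le_exp]

lemma inv_mul_le_ofReal_exp {Z a : ℝ≥0∞} {n r t : ℝ}
    (hZ : ENNReal.ofReal (Real.exp (-n * t)) ≤ Z)
    (ha : a ≤ ENNReal.ofReal (Real.exp (-n * r))) :
    Z⁻¹ * a ≤ ENNReal.ofReal (Real.exp (-n * (r - t))) :=
  calc Z⁻¹ * a
      ≤ (ENNReal.ofReal (Real.exp (-n * t)))⁻¹ * ENNReal.ofReal (Real.exp (-n * r)) :=
        mul_le_mul' (ENNReal.inv_le_inv' hZ) ha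
    _ = ENNReal.ofReal (Real.exp (-n * (r - t))) := by
        rw [← ofReal_exp_neg, ← ofReal_exp_add]
        ring_nf

lemma ofReal_exp_le_inv_mul {Z a : ℝ≥0∞} {n r t : ℝ}
    (hZ : Z ≤ ENNReal.ofReal (Real.exp (-n * t)))
    (ha : ENNReal.ofReal (Real.exp (-n * r)) ≤ a) :
    ENNReal.ofReal (Real.exp (-n * (r - t))) ≤ Z⁻¹ * a :=
  calc ENNReal.ofReal (Real.exp (-n * (r - t)))
      = (ENNReal.ofReal (Real.exp (-n * t)))⁻¹ * ENNReal.ofReal (Real.exp (-n * r)) := by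
        rw [← ofReal_exp_neg, ← ofReal_exp_add]
        ring_nf
    _ ≤ Z⁻¹ * a := mul_le_mul' (ENNReal.inv_le_inv' hZ) ha

lemma eventually_natCast_mul_ofReal_exp_le (n : ℕ) {q r : ℝ} (hrq : r < q) :
    ∀ᶠ N : ℕ in atTop, (n : ℝ≥0∞) * ENNReal.ofReal (Real.exp (-N * q)) ≤
      ENNReal.ofReal (Real.exp (-N * r)) := by
  have hdecay : Tendsto (fun N : ℕ => (n : ℝ) * Real.exp (-(N * (q - r)))) atTop (𝓝 0) := by
    simpa using (Real.tendsto_exp_neg_atTop_nhds_zero.comp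
      (tendsto_natCast_atTop_atTop.atTop_mul_const (sub_pos.2 hrq))).const_mul (n : ℝ)
  filter_upwards [hdecay.eventually (ge_mem_nhds one_pos)] with N hN
  calc (n : ℝ≥0∞) * ENNReal.ofReal (Real.exp (-N * q))
      = ENNReal.ofReal ((n : ℝ) * Real.exp (-(N * (q - r)))) *
          ENNReal.ofReal (Real.exp (-N * r)) := by
        rw [← ENNReal.ofReal_natCast, ← ENNReal.ofReal_mul (Nat.cast_nonneg n),
          ← ENNReal.ofReal_mul (by positivity), mul_assoc, ← Real.exp_add]
        ring_nf
    _ ≤ 1 * ENNReal.ofReal (Real.exp (-N * r)) := by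
        gcongr
        exact ENNReal.ofReal_le_one.2 hN
    _ = ENNReal.ofReal (Real.exp (-N * r)) := one_mul _

end ENNReal

namespace EReal

lemma iInf_sub_coe {ι : Sort*} (f : ι → EReal) (a : ℝ) :
    ⨅ i, (f i - a) = (⨅ i, f i) - a := by
  refine le_antisymm ?_ (le_iInf fun i => EReal.sub_le_sub (iInf_le f i) le_rfl)
  rw [EReal.le_sub_iff_add_le (.inl (EReal.coe_ne_bot a)) (.inl (EReal.coe_ne_top a))]
  exact le_iInf fun i =>
    (EReal.le_sub_iff_add_le (.inl (EReal.coe_ne_bot a)) (.inl (EReal.coe_ne_top a))).1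
      (iInf_le _ i)

end EReal

lemma LowerSemicontinuous.sub_coe_real {E : Type*} [TopologicalSpace E] {f : E → EReal}
    {g : E → ℝ} (hf : LowerSemicontinuous f) (hg : Continuous g) :
    LowerSemicontinuous fun x => f x - g x := by
  have hneg : LowerSemicontinuous fun x => ((-g x : ℝ) : EReal) :=
    (continuous_coe_real_ereal.comp hg.neg).lowerSemicontinuous
  simpa [sub_eq_add_neg] using
    hf.add' hneg fun x => EReal.continuousAt_add (.inr (by simp)) (.inr (by simp))

lemma exists_lt_mem_Icc_add_mul {a δ y : ℝ} {k : ℕ} (hδ : 0 < δ) (hay : a ≤ y)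
    (hyk : y < a + k * δ) : ∃ j < k, y ∈ Icc (a + j * δ) (a + j * δ + δ) := by
  have h0 : 0 ≤ (y - a) / δ := div_nonneg (sub_nonneg.2 hay) hδ.le
  refine ⟨⌊(y - a) / δ⌋₊, (Nat.floor_lt h0).2 ?_, ?_, ?_⟩
  · rw [div_lt_iff₀ hδ]
    linarith
  · have := Nat.floor_le h0
    rw [le_div_iff₀ hδ] at this
    linarith
  · have := Nat.lt_floor_add_one ((y - a) / δ)
    rw [div_lt_iff₀ hδ] at this
    linarith

lemma subset_slabs_union {E : Type*} (F : E → ℝ) (C : Set E) {a δ L : ℝ} {k : ℕ}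
    (hδ : 0 < δ) (hL : L ≤ a + k * δ) :
    C ⊆ (⋃ j ∈ Finset.range k, C ∩ F ⁻¹' Icc (a + j * δ) (a + j * δ + δ)) ∪
      (C ∩ F ⁻¹' Iic a ∪ F ⁻¹' Ici L) := by
  intro x hx
  rcases le_or_gt (F x) a with hlow | hlow
  · exact .inr (.inl ⟨hx, hlow⟩)
  rcases le_or_gt L (F x) with hhigh | hhigh
  · exact .inr (.inr hhigh)
  obtain ⟨j, hj, hFx⟩ := exists_lt_mem_Icc_add_mul hδ hlow.le (hhigh.trans_le hL)
  exact .inl (mem_biUnion (Finset.mem_range.2 hj) ⟨hx, hFx⟩)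

section ExpWeighted

variable {Ω : ℕ → Type*} [∀ N, MeasurableSpace (Ω N)]

noncomputable def expWeighted (P : ∀ N, Measure (Ω N)) (G : ∀ N, Ω N → ℝ) (N : ℕ) :
    Measure (Ω N) :=
  (P N).withDensity fun ω => ENNReal.ofReal (Real.exp (N * G N ω))

section

variable (P : ∀ N, Measure (Ω N)) (G : ∀ N, Ω N → ℝ) {N : ℕ} {A : Set (Ω N)} {b : ℝ}

lemma expWeighted_le_of_le (hA : MeasurableSet A) (hb : ∀ ω ∈ A, G N ω ≤ b) :
    expWeighted P G N A ≤ ENNReal.ofReal (Real.exp (N * b)) * P N A := by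
  rw [expWeighted, withDensity_apply _ hA, ← setLIntegral_const]
  exact setLIntegral_mono' hA fun ω hω => ENNReal.ofReal_exp_le_ofReal_exp.2 <|
    mul_le_mul_of_nonneg_left (hb ω hω) N.cast_nonneg

lemma expWeighted_le_ofReal_exp [∀ N, IsProbabilityMeasure (P N)] (hA : MeasurableSet A)
    (hb : ∀ ω ∈ A, G N ω ≤ b) : expWeighted P G N A ≤ ENNReal.ofReal (Real.exp (N * b)) :=
  (expWeighted_le_of_le P G hA hb).trans (mul_le_of_le_one_right' prob_le_one)

lemma le_expWeighted_of_le (hA : MeasurableSet A) (hb : ∀ ω ∈ A, b ≤ G N ω) :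
    ENNReal.ofReal (Real.exp (N * b)) * P N A ≤ expWeighted P G N A := by
  rw [expWeighted, withDensity_apply _ hA, ← setLIntegral_const]
  exact setLIntegral_mono' hA fun ω hω => ENNReal.ofReal_exp_le_ofReal_exp.2 <|
    mul_le_mul_of_nonneg_left (hb ω hω) N.cast_nonneg

end

theorem isLDP_normalized_of_bounds {E : Type*} [TopologicalSpace E] (W : ∀ N, Measure (Ω N))
    (X : ∀ N, Ω N → E) {K : E → EReal} {φ : ℝ} (hK : LowerSemicontinuous K)
    (hφ : ⨅ x, K x = φ)
    (hupper : ∀ C : Set E, IsClosed C → ∀ r : ℝ, (r : EReal) < ⨅ x ∈ C, K x →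
      ∀ᶠ N : ℕ in atTop,
        W N {ω | X N ω ∈ C} ≤ ENNReal.ofReal (Real.exp (-(N : ℝ) * r)))
    (hlower : ∀ O : Set E, IsOpen O → ∀ t : ℝ, ⨅ x ∈ O, K x < (t : EReal) →
      ∀ᶠ N : ℕ in atTop,
        ENNReal.ofReal (Real.exp (-(N : ℝ) * t)) ≤ W N {ω | X N ω ∈ O}) :
    IsLDP (fun N => (W N univ)⁻¹ • W N) X fun x => K x - φ := by
  have hZupper : ∀ r : ℝ, r < φ →
      ∀ᶠ N : ℕ in atTop, W N univ ≤ ENNReal.ofReal (Real.exp (-(N : ℝ) * r)) := by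
    intro r hr
    simpa only [mem_univ, ofPred_true] using
      hupper univ isClosed_univ r (by rwa [iInf_univ, hφ, EReal.coe_lt_coe_iff])
  have hZlower : ∀ t : ℝ, φ < t →
      ∀ᶠ N : ℕ in atTop, ENNReal.ofReal (Real.exp (-(N : ℝ) * t)) ≤ W N univ := by
    intro t ht
    simpa only [mem_univ, ofPred_true] using
      hlower univ isOpen_univ t (by rwa [iInf_univ, hφ, EReal.coe_lt_coe_iff])
  refine ⟨fun x => ?_, hK.sub_coe_real continuous_const, fun C hC c hc => ?_,
    fun O hO c hc => ?_⟩
  · exact (EReal.sub_nonneg (.inr (EReal.coe_ne_top φ)) (.inr (EReal.coe_ne_bot φ))).2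
      (hφ ▸ iInf_le K x)
  · simp only [EReal.iInf_sub_coe] at hc
    rw [EReal.lt_sub_iff_add_lt (.inl (EReal.coe_ne_bot φ)) (.inl (EReal.coe_ne_top φ)),
      ← EReal.coe_add] at hc
    obtain ⟨r, hcr, hr⟩ := EReal.exists_between_coe_real hc
    have hcr : c + φ < r := EReal.coe_lt_coe_iff.1 hcr
    filter_upwards [hupper C hC r hr, hZlower (r - c) (by linarith)] with N hW hZ
    simpa only [Measure.smul_apply, smul_eq_mul, sub_sub_cancel] using
      ENNReal.inv_mul_le_ofReal_exp hZ hW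
  · simp only [EReal.iInf_sub_coe] at hc
    rw [EReal.sub_lt_iff (.inl (EReal.coe_ne_bot φ)) (.inl (EReal.coe_ne_top φ)),
      ← EReal.coe_add] at hc
    obtain ⟨t, ht, htc⟩ := EReal.exists_between_coe_real hc
    have htc : t < c + φ := EReal.coe_lt_coe_iff.1 htc
    filter_upwards [hlower O hO t ht, hZupper (t - c) (by linarith)] with N hW hZ
    simpa only [Measure.smul_apply, smul_eq_mul, sub_sub_cancel] using
      ENNReal.ofReal_exp_le_inv_mul hZ hW

namespace IsLDP

variable {E : Type*} [TopologicalSpace E] [MeasurableSpace E] [OpensMeasurableSpace E]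
  {P : ∀ N, Measure (Ω N)} {X : ∀ N, Ω N → E} {I : E → EReal} {F : E → ℝ}

theorem expWeighted_lower (hLDP : IsLDP P X I) (hX : ∀ N, Measurable (X N))
    (hF : LowerSemicontinuous F) {O : Set E} (hO : IsOpen O) {t : ℝ}
    (ht : ⨅ x ∈ O, I x - F x < (t : EReal)) :
    ∀ᶠ N : ℕ in atTop, ENNReal.ofReal (Real.exp (-(N : ℝ) * t)) ≤
      expWeighted P (fun N ω => F (X N ω)) N {ω | X N ω ∈ O} := by
  obtain ⟨x₀, hx₀O, hx₀⟩ := by simpa only [iInf_lt_iff, exists_prop] using ht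
  rw [EReal.sub_lt_iff (.inl (EReal.coe_ne_bot _)) (.inl (EReal.coe_ne_top _)),
    ← EReal.coe_add] at hx₀
  obtain ⟨c, hIc, hct⟩ := EReal.exists_between_coe_real hx₀
  have hct : c < t + F x₀ := EReal.coe_lt_coe_iff.1 hct
  -- `c` splits the gap `I x₀ < t + F x₀`: `I x₀ < c` feeds the LDP lower bound on `B`, and
  -- `c - t < F x₀` makes `B` a neighbourhood of `x₀` on which the weight is `≥ e^{N (c - t)}`
  set B := O ∩ F ⁻¹' Ioi (c - t)
  have hB : IsOpen B := hO.inter (hF.isOpen_preimage _)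
  have hIB : ⨅ x ∈ B, I x < (c : EReal) :=
    (iInf₂_le x₀ ⟨hx₀O, show c - t < F x₀ by linarith⟩).trans_lt hIc
  filter_upwards [hLDP.lower B hB c hIB] with N hN
  have hBmeas : MeasurableSet (X N ⁻¹' B) := hB.measurableSet.preimage (hX N)
  calc ENNReal.ofReal (Real.exp (-(N : ℝ) * t))
      = ENNReal.ofReal (Real.exp (N * (c - t))) * ENNReal.ofReal (Real.exp (-(N : ℝ) * c)) := by
        rw [← ENNReal.ofReal_exp_add]
        ring_nf
    _ ≤ ENNReal.ofReal (Real.exp (N * (c - t))) * P N (X N ⁻¹' B) := by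
        gcongr
        exact hN
    _ ≤ expWeighted P (fun N ω => F (X N ω)) N (X N ⁻¹' B) :=
        le_expWeighted_of_le P _ hBmeas fun ω hω => hω.2.le
    _ ≤ expWeighted P (fun N ω => F (X N ω)) N {ω | X N ω ∈ O} :=
        measure_mono fun ω hω => hω.1

theorem expWeighted_slab_le (hLDP : IsLDP P X I) (hX : ∀ N, Measurable (X N))
    (hF : Continuous F) {C : Set E} (hC : IsClosed C) {m : ℝ}
    (hI : ∀ x ∈ C, ((m + F x : ℝ) : EReal) ≤ I x) (a : ℝ) {δ : ℝ} (hδ : 0 < δ) :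
    ∀ᶠ N : ℕ in atTop,
      expWeighted P (fun N ω => F (X N ω)) N (X N ⁻¹' (C ∩ F ⁻¹' Icc a (a + δ))) ≤
        ENNReal.ofReal (Real.exp (-(N : ℝ) * (m - 2 * δ))) := by
  have hS : IsClosed (C ∩ F ⁻¹' Icc a (a + δ)) := hC.inter (isClosed_Icc.preimage hF)
  have hIS : ((m + a - δ : ℝ) : EReal) < ⨅ x ∈ C ∩ F ⁻¹' Icc a (a + δ), I x :=
    lt_of_lt_of_le (b := ((m + a : ℝ) : EReal)) (EReal.coe_lt_coe_iff.2 (by linarith)) <|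
      le_iInf₂ fun x hx => (EReal.coe_le_coe_iff.2 (by linarith [hx.2.1])).trans (hI x hx.1)
  filter_upwards [hLDP.upper _ hS _ hIS] with N hN
  calc expWeighted P (fun N ω => F (X N ω)) N (X N ⁻¹' (C ∩ F ⁻¹' Icc a (a + δ)))
      ≤ ENNReal.ofReal (Real.exp (N * (a + δ))) *
          P N (X N ⁻¹' (C ∩ F ⁻¹' Icc a (a + δ))) :=
        expWeighted_le_of_le P _ (hS.measurableSet.preimage (hX N)) fun ω hω => hω.2.2
    _ ≤ ENNReal.ofReal (Real.exp (N * (a + δ))) *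
          ENNReal.ofReal (Real.exp (-(N : ℝ) * (m + a - δ))) := by
        gcongr
        exact hN
    _ = ENNReal.ofReal (Real.exp (-(N : ℝ) * (m - 2 * δ))) := by
        rw [← ENNReal.ofReal_exp_add]
        ring_nf

theorem expWeighted_upper [∀ N, IsProbabilityMeasure (P N)] (hLDP : IsLDP P X I)
    (hX : ∀ N, Measurable (X N)) (hF : Continuous F)
    (htail : ∀ M : ℝ, ∀ᶠ L in (atTop : Filter ℝ), ∀ᶠ N : ℕ in atTop,
      expWeighted P (fun N ω => F (X N ω)) N {ω | L ≤ F (X N ω)} ≤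
        ENNReal.ofReal (Real.exp (-(N : ℝ) * M)))
    {C : Set E} (hC : IsClosed C) {r : ℝ} (hr : (r : EReal) < ⨅ x ∈ C, I x - F x) :
    ∀ᶠ N : ℕ in atTop, expWeighted P (fun N ω => F (X N ω)) N {ω | X N ω ∈ C} ≤
      ENNReal.ofReal (Real.exp (-(N : ℝ) * r)) := by
  obtain ⟨m, hrm, hm⟩ := EReal.exists_between_coe_real hr
  obtain ⟨q, hrq, hqm⟩ := exists_between (EReal.coe_lt_coe_iff.1 hrm)
  -- with `m = q + 2 δ`, each slab, the bottom and the tail cost `e^{-N q}`; `r < q` absorbs the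
  -- number `k + 2` of pieces
  obtain ⟨δ, hδ, rfl⟩ : ∃ δ > 0, m = q + 2 * δ := ⟨(m - q) / 2, by linarith, by ring⟩
  have hI : ∀ x ∈ C, ((q + 2 * δ + F x : ℝ) : EReal) ≤ I x := fun x hx => by
    rw [EReal.coe_add, ← EReal.le_sub_iff_add_le (.inl (EReal.coe_ne_bot _))
      (.inl (EReal.coe_ne_top _))]
    exact hm.le.trans (iInf₂_le x hx)
  obtain ⟨L, hL⟩ := (htail q).exists
  obtain ⟨k, hk⟩ : ∃ k : ℕ, L ≤ -q + k * δ := by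
    obtain ⟨k, hk⟩ := exists_nat_ge ((L + q) / δ)
    exact ⟨k, by rw [div_le_iff₀ hδ] at hk; linarith⟩
  filter_upwards [(Finset.range k).eventually_all.2 fun j _ =>
      hLDP.expWeighted_slab_le hX hF hC hI (-q + j * δ) hδ, hL,
    ENNReal.eventually_natCast_mul_ofReal_exp_le (k + 2) hrq] with N hslab htailN hsum
  simp only [add_sub_cancel_right] at hslab
  set W := expWeighted P (fun N ω => F (X N ω)) N
  have hbottom :
      W (X N ⁻¹' (C ∩ F ⁻¹' Iic (-q))) ≤ ENNReal.ofReal (Real.exp (-(N : ℝ) * q)) := by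
    simpa only [mul_neg, neg_mul] using
      expWeighted_le_ofReal_exp P (fun N ω => F (X N ω)) (b := -q)
        ((hC.inter (isClosed_Iic.preimage hF)).measurableSet.preimage (hX N)) fun ω hω => hω.2
  calc W (X N ⁻¹' C)
      ≤ ∑ j ∈ Finset.range k,
            W (X N ⁻¹' (C ∩ F ⁻¹' Icc (-q + j * δ) (-q + j * δ + δ))) +
          (W (X N ⁻¹' (C ∩ F ⁻¹' Iic (-q))) + W (X N ⁻¹' (F ⁻¹' Ici L))) := by
        refine (measure_mono (preimage_mono (subset_slabs_union F C hδ hk))).trans ?_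
        simp only [preimage_union, preimage_iUnion₂]
        exact (measure_union_le _ _).trans
          (add_le_add (measure_biUnion_finset_le _ _) (measure_union_le _ _))
    _ ≤ ∑ _j ∈ Finset.range k, ENNReal.ofReal (Real.exp (-(N : ℝ) * q)) +
          (ENNReal.ofReal (Real.exp (-(N : ℝ) * q)) +
            ENNReal.ofReal (Real.exp (-(N : ℝ) * q))) :=
        add_le_add (Finset.sum_le_sum hslab) (add_le_add hbottom htailN)
    _ = ((k + 2 : ℕ) : ℝ≥0∞) * ENNReal.ofReal (Real.exp (-(N : ℝ) * q)) := by
        rw [Finset.sum_const, Finset.card_range, nsmul_eq_mul]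
        push_cast
        ring
    _ ≤ ENNReal.ofReal (Real.exp (-(N : ℝ) * r)) := hsum

theorem normalized_expWeighted [∀ N, IsProbabilityMeasure (P N)] (hLDP : IsLDP P X I)
    (hX : ∀ N, Measurable (X N)) (hF : Continuous F)
    (htail : ∀ M : ℝ, ∀ᶠ L in (atTop : Filter ℝ), ∀ᶠ N : ℕ in atTop,
      expWeighted P (fun N ω => F (X N ω)) N {ω | L ≤ F (X N ω)} ≤
        ENNReal.ofReal (Real.exp (-(N : ℝ) * M)))
    {φ : ℝ} (hφ : ⨅ x, I x - F x = φ) :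
    IsLDP (fun N => (expWeighted P (fun N ω => F (X N ω)) N univ)⁻¹ •
        expWeighted P (fun N ω => F (X N ω)) N) X fun x => I x - F x - φ :=
  isLDP_normalized_of_bounds _ X (hLDP.lsc.sub_coe_real hF) hφ
    (fun _ hC _ hr => hLDP.expWeighted_upper hX hF htail hC hr)
    (fun _ hO _ ht => hLDP.expWeighted_lower hX hF.lowerSemicontinuous hO ht)

end IsLDP

end ExpWeighted

theorem mean_energy_canonical_LDP_general
    {Ω : ℕ → Type*} [∀ N, MeasurableSpace (Ω N)]
    (P : ∀ N, Measure (Ω N)) [∀ N, IsProbabilityMeasure (P N)]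
    (h : ∀ N, Ω N → ℝ) (hmeas : ∀ N, Measurable (h N))
    (β : ℝ) (s : ℝ → EReal)
    (hLDP : IsLDP P h fun u => -(s u))
    (hmoment : ∀ M : ℝ, ∀ᶠ L in (atTop : Filter ℝ), ∀ᶠ N : ℕ in atTop,
      (∫⁻ ω in {ω | L ≤ -(β * h N ω)},
          ENNReal.ofReal (Real.exp (-(β * (N : ℝ) * h N ω))) ∂(P N))
        ≤ ENNReal.ofReal (Real.exp (-(N : ℝ) * M)))
    (φβ : ℝ) (hφ : (⨅ u : ℝ, ((β * u : ℝ) : EReal) - s u) = (φβ : EReal))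
    (Z : ℕ → ℝ≥0∞)
    (hZ : ∀ N : ℕ, Z N = ∫⁻ ω, ENNReal.ofReal (Real.exp (-(β * (N : ℝ) * h N ω))) ∂(P N))
    (Pcan : ∀ N, Measure (Ω N))
    (hPcan : ∀ N : ℕ, Pcan N =
      (Z N)⁻¹ • (P N).withDensity fun ω => ENNReal.ofReal (Real.exp (-(β * (N : ℝ) * h N ω)))) :
    IsLDP Pcan h fun u => ((β * u : ℝ) : EReal) - s u - (φβ : EReal) := by
  have hdensity : ∀ N : ℕ, (fun ω => ENNReal.ofReal (Real.exp (-(β * (N : ℝ) * h N ω)))) =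
      fun ω => ENNReal.ofReal (Real.exp (N * -(β * h N ω))) :=
    fun N => funext fun ω => by ring_nf
  have hrate : ∀ u : ℝ, -(s u) - ((-(β * u) : ℝ) : EReal) = ((β * u : ℝ) : EReal) - s u :=
    fun u => by rw [EReal.coe_neg, sub_eq_add_neg, neg_neg, add_comm, ← sub_eq_add_neg]
  have htail : ∀ M : ℝ, ∀ᶠ L in (atTop : Filter ℝ), ∀ᶠ N : ℕ in atTop,
      expWeighted P (fun N ω => -(β * h N ω)) N {ω | L ≤ -(β * h N ω)} ≤
        ENNReal.ofReal (Real.exp (-(N : ℝ) * M)) := fun M =>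
    (hmoment M).mono fun L hL => hL.mono fun N hN => by
      have hA : MeasurableSet {ω | L ≤ -(β * h N ω)} :=
        measurableSet_le measurable_const ((hmeas N).const_mul β).neg
      rwa [expWeighted, withDensity_apply _ hA, ← hdensity]
  have hPcan' : Pcan = fun N => (expWeighted P (fun N ω => -(β * h N ω)) N univ)⁻¹ •
      expWeighted P (fun N ω => -(β * h N ω)) N := funext fun N => by
    rw [hPcan, hZ, expWeighted, ← hdensity, withDensity_apply _ MeasurableSet.univ,
      Measure.restrict_univ]
  have hφ' : ⨅ u : ℝ, -(s u) - ((-(β * u) : ℝ) : EReal) = φβ := by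
    simpa only [hrate] using hφ
  simpa only [hPcan', hrate] using hLDP.normalized_expWeighted (F := fun u => -(β * u)) hmeas
    (continuous_const_mul β).neg htail hφ'

theorem mean_energy_canonical_LDP
    {Ω : ℕ → Type*} [∀ N, MeasurableSpace (Ω N)]
    (P : ∀ N, Measure (Ω N)) [∀ N, IsProbabilityMeasure (P N)]
    (h : ∀ N, Ω N → ℝ) (hmeas : ∀ N, Measurable (h N))
    (β : ℝ) (s : ℝ → EReal)
    (husc : UpperSemicontinuous s)
    (hne : ∃ u : ℝ, s u ≠ ⊥)
    (hLDP : IsLDP P h fun u => -(s u))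
    (hmoment : ∀ M : ℝ, ∀ᶠ L in (atTop : Filter ℝ), ∀ᶠ N : ℕ in atTop,
      (∫⁻ ω in {ω | L ≤ -(β * h N ω)},
          ENNReal.ofReal (Real.exp (-(β * (N : ℝ) * h N ω))) ∂(P N))
        ≤ ENNReal.ofReal (Real.exp (-(N : ℝ) * M)))
    (φβ : ℝ) (hφ : (⨅ u : ℝ, ((β * u : ℝ) : EReal) - s u) = (φβ : EReal))
    (Z : ℕ → ℝ≥0∞)
    (hZ : ∀ N : ℕ, Z N = ∫⁻ ω, ENNReal.ofReal (Real.exp (-(β * (N : ℝ) * h N ω))) ∂(P N))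
    (hZfin : ∀ N, 0 < Z N ∧ Z N ≠ ∞)
    (Pcan : ∀ N, Measure (Ω N))
    (hPcan : ∀ N : ℕ, Pcan N =
      (Z N)⁻¹ • (P N).withDensity fun ω => ENNReal.ofReal (Real.exp (-(β * (N : ℝ) * h N ω)))) :
    IsLDP Pcan h fun u => ((β * u : ℝ) : EReal) - s u - (φβ : EReal) :=
  mean_energy_canonical_LDP_general P h hmeas β s hLDP hmoment φβ hφ Z hZ Pcan hPcan
end

section
/- Let s : ℝ → ℝ ∪ {−∞} with s(u) finite, u an interior point of dom s = {v : s(v) > −∞}, and suppose φ(β₀) > −∞ for some β₀ ∈ ℝ. If s(u) = s**(u), then ∂s(u) ≠ ∅, i.e., s admits a supporting line at u. -/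
/-!
STATEMENT 4: For `s : ℝ → ℝ ∪ {-∞}` (modeled as `s : ℝ → EReal` with `s v ≠ ⊤`) with
`s u` finite, `u` an interior point of `dom s = {v | s v ≠ ⊥}`, and `φ(β₀) > -∞` for
some `β₀`: if `s u = s**(u)` (where `s**(u) = inf_γ (γ u - φ(γ))`,
`φ(γ) = inf_v (γ v - s v)`), then `∂s(u) ≠ ∅`, i.e. `s` admits a supporting line at `u`.
-/

open scoped ENNReal

theorem concave_point_admits_supporting_line
    (s : ℝ → EReal) (hs_top : ∀ v : ℝ, s v ≠ ⊤)
    (u : ℝ) (hsu_bot : s u ≠ ⊥)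
    (hu_int : u ∈ interior {v : ℝ | s v ≠ ⊥})
    (hφ : ∃ β₀ : ℝ, (⨅ v : ℝ, ((β₀ * v : ℝ) : EReal) - s v) ≠ ⊥)
    (henv : s u = ⨅ γ : ℝ, ((γ * u : ℝ) : EReal) - (⨅ v : ℝ, ((γ * v : ℝ) : EReal) - s v)) :
    ∃ β : ℝ, ∀ v : ℝ, s v ≤ s u + ((β * (v - u) : ℝ) : EReal) := by
  classical
  set φf : ℝ → EReal := fun γ => ⨅ v : ℝ, ((γ * v : ℝ) : EReal) - s v with hφdef
  set g : ℝ → EReal := fun γ => ((γ * u : ℝ) : EReal) - φf γ with hgdef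
  -- interior points
  obtain ⟨ε, hε, hball⟩ := Metric.mem_nhds_iff.mp (mem_interior_iff_mem_nhds.mp hu_int)
  set δ := ε / 2 with hδdef
  have hδ : 0 < δ := by positivity
  have hmem : ∀ t : ℝ, |t| ≤ δ → s (u + t) ≠ ⊥ := by
    intro t ht
    apply hball
    simp only [Metric.mem_ball, Real.dist_eq]
    have : u + t - u = t := by ring
    rw [this]
    calc |t| ≤ δ := ht
      _ < ε := by rw [hδdef]; linarith
  have hup : s (u + δ) ≠ ⊥ := hmem δ (by rw [abs_of_pos hδ])
  have hdn : s (u - δ) ≠ ⊥ := by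
    have := hmem (-δ) (by rw [abs_neg, abs_of_pos hδ])
    simpa [sub_eq_add_neg] using this
  set su := (s u).toReal with hsudef
  have hsur : s u = (su : EReal) := (EReal.coe_toReal (hs_top u) hsu_bot).symm
  set a := (s (u + δ)).toReal with hadef
  have har : s (u + δ) = (a : EReal) := (EReal.coe_toReal (hs_top _) hup).symm
  set b := (s (u - δ)).toReal with hbdef
  have hbr : s (u - δ) = (b : EReal) := (EReal.coe_toReal (hs_top _) hdn).symm
  -- key inequality
  have key : ∀ (γ v : ℝ), s v + ((γ * (u - v) : ℝ) : EReal) ≤ g γ := by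
    intro γ v
    rcases eq_or_ne (s v) ⊥ with hv | hv
    · simp [hv]
    · have hvr : s v = ((s v).toReal : EReal) := (EReal.coe_toReal (hs_top v) hv).symm
      set r := (s v).toReal with hrdef
      have hφle : φf γ ≤ ((γ * v - r : ℝ) : EReal) := by
        refine iInf_le_of_le v ?_
        rw [hvr, ← EReal.coe_sub]
      rcases eq_or_ne (φf γ) ⊥ with hb2 | hb2
      · have htop : g γ = ⊤ := by
          rw [hgdef]; simp only [hb2]; exact EReal.coe_sub_bot _
        rw [htop]; exact le_top
      · have hbt : φf γ ≠ ⊤ := by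
          intro h; rw [h] at hφle; exact (not_le.mpr (EReal.coe_lt_top _)) hφle
        have hpr : φf γ = (((φf γ).toReal) : EReal) := (EReal.coe_toReal hbt hb2).symm
        set p := (φf γ).toReal with hpdef
        have hple : p ≤ γ * v - r := by
          rw [hpr] at hφle; exact_mod_cast hφle
        rw [hgdef]
        simp only [hpr]
        rw [← EReal.coe_sub]
        rw [hvr, ← EReal.coe_add]
        exact_mod_cast by linarith
  have hgb : ∀ γ, ((su : ℝ) : EReal) ≤ g γ := by
    intro γ
    have := key γ u
    rw [hsur] at this
    simpa using this
  -- envelope: inf g = su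
  have hinf : (⨅ γ : ℝ, g γ) = ((su : ℝ) : EReal) := by
    rw [← hsur]; exact henv.symm
  -- approximate minimizers
  have hseq : ∀ n : ℕ, ∃ γ : ℝ, g γ < ((su + 1 / (n + 1) : ℝ) : EReal) := by
    intro n
    have hlt : (⨅ γ : ℝ, g γ) < ((su + 1 / (n + 1) : ℝ) : EReal) := by
      rw [hinf]
      exact_mod_cast lt_add_of_pos_right su (by positivity)
    exact iInf_lt_iff.mp hlt
  choose γs hγs using hseq
  -- real-valued approximate inequality generator
  have hreal : ∀ (n : ℕ) (v : ℝ) (r : ℝ), s v = (r : EReal) →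
      r + γs n * (u - v) ≤ su + 1 / (n + 1) := by
    intro n v r hvr
    have h1 := (key (γs n) v).trans_lt (hγs n)
    rw [hvr, ← EReal.coe_add] at h1
    exact_mod_cast h1.le
  -- boundedness
  set M := (su + 1 - min a b) / δ with hMdef
  have hbound : ∀ n, γs n ∈ Set.Icc (-M) M := by
    intro n
    have h1 : a + γs n * (u - (u + δ)) ≤ su + 1 / (n + 1) := hreal n (u + δ) a har
    have h2 : b + γs n * (u - (u - δ)) ≤ su + 1 / (n + 1) := hreal n (u - δ) b hbr
    have hn1 : (1 : ℝ) / (n + 1) ≤ 1 := by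
      rw [div_le_one (by positivity)]; linarith [Nat.cast_nonneg (α := ℝ) n]
    have h1' : a - γs n * δ ≤ su + 1 := by nlinarith
    have h2' : b + γs n * δ ≤ su + 1 := by nlinarith
    have habs : |γs n| * δ ≤ su + 1 - min a b := by
      rcases abs_cases (γs n) with ⟨h, _⟩ | ⟨h, _⟩ <;> rw [h]
      · nlinarith [min_le_right a b]
      · nlinarith [min_le_left a b]
    exact Set.mem_Icc.mpr (abs_le.mp ((le_div_iff₀ hδ).mpr habs))
  obtain ⟨β, -, ψ, hψ, hψlim⟩ := tendsto_subseq_of_bounded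
    (Metric.isBounded_Icc (-M) M) hbound
  refine ⟨β, fun v => ?_⟩
  rcases eq_or_ne (s v) ⊥ with hv | hv
  · simp [hv]
  · have hvr : s v = ((s v).toReal : EReal) := (EReal.coe_toReal (hs_top v) hv).symm
    set r := (s v).toReal with hrdef
    have hineq : ∀ k : ℕ, r + γs (ψ k) * (u - v) ≤ su + 1 / (ψ k + 1) :=
      fun k => hreal (ψ k) v r hvr
    have hLHS : Filter.Tendsto (fun k => r + γs (ψ k) * (u - v)) Filter.atTop
        (nhds (r + β * (u - v))) :=
      Filter.Tendsto.const_add _ (hψlim.mul_const _)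
    have hRHS : Filter.Tendsto (fun k : ℕ => su + 1 / ((ψ k : ℝ) + 1)) Filter.atTop
        (nhds (su + 0)) := by
      refine Filter.Tendsto.const_add _ ?_
      exact tendsto_one_div_add_atTop_nhds_zero_nat.comp hψ.tendsto_atTop
    have hfin : r + β * (u - v) ≤ su + 0 :=
      le_of_tendsto_of_tendsto' hLHS hRHS hineq
    rw [hvr, hsur, ← EReal.coe_add]
    exact_mod_cast by linarith
end

section
/- For every N ∈ ℕ, β ∈ ℝ with Z_N(β) ∈ (0,∞), u ∈ ℝ and r > 0 with P_N{h_N ∈ [u−r, u+r]} > 0, and every measurable set A ⊆ Ω_N, the exact sandwich inequality holds: e^{−2|β|Nr} · P_N^{u,r}(A) · P_{N,β}{h_N ∈ [u−r, u+r]} ≤ P_{N,β}(A ∩ {h_N ∈ [u−r, u+r]}) ≤ e^{2|β|Nr} · P_N^{u,r}(A) · P_{N,β}{h_N ∈ [u−r, u+r]}. -/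
/-!
STATEMENT 5: Exact sandwich inequality between the canonical ensemble restricted to an
energy shell and the microcanonical ensemble: for every measurable `A`,
`e^{-2|β|Nr} · P_N^{u,r}(A) · P_{N,β}(B) ≤ P_{N,β}(A ∩ B) ≤ e^{2|β|Nr} · P_N^{u,r}(A) · P_{N,β}(B)`
where `B = {h_N ∈ [u-r, u+r]}`, `P_{N,β} = Z_N(β)⁻¹ e^{-βNh_N} P_N` and
`P_N^{u,r} = P_N(·|B)`.
-/

open MeasureTheory Filter Set Topology
open scoped ENNReal

theorem canonical_microcanonical_sandwich
    {Ω : Type*} [MeasurableSpace Ω]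
    (P : Measure Ω) [IsProbabilityMeasure P]
    (h : Ω → ℝ) (hmeas : Measurable h)
    (N : ℕ) (β u r : ℝ) (hr : 0 < r)
    (Z : ℝ≥0∞)
    (hZ : Z = ∫⁻ ω, ENNReal.ofReal (Real.exp (-(β * (N : ℝ) * h ω))) ∂P)
    (hZpos : 0 < Z) (hZfin : Z ≠ ∞)
    (hp : 0 < P {ω | h ω ∈ Set.Icc (u - r) (u + r)})
    (Pcan : Measure Ω)
    (hPcan : Pcan = Z⁻¹ • P.withDensity fun ω => ENNReal.ofReal (Real.exp (-(β * (N : ℝ) * h ω))))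
    (Pmicro : Measure Ω)
    (hPmicro : Pmicro = ProbabilityTheory.cond P {ω | h ω ∈ Set.Icc (u - r) (u + r)})
    (A : Set Ω) (hA : MeasurableSet A) :
    ENNReal.ofReal (Real.exp (-(2 * |β| * (N : ℝ) * r))) * Pmicro A
        * Pcan {ω | h ω ∈ Set.Icc (u - r) (u + r)}
      ≤ Pcan (A ∩ {ω | h ω ∈ Set.Icc (u - r) (u + r)}) ∧
    Pcan (A ∩ {ω | h ω ∈ Set.Icc (u - r) (u + r)})
      ≤ ENNReal.ofReal (Real.exp (2 * |β| * (N : ℝ) * r)) * Pmicro A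
        * Pcan {ω | h ω ∈ Set.Icc (u - r) (u + r)} := by
  set B : Set Ω := {ω | h ω ∈ Set.Icc (u - r) (u + r)} with hBdef
  have hB : MeasurableSet B := hmeas measurableSet_Icc
  set f : Ω → ℝ≥0∞ := fun ω => ENNReal.ofReal (Real.exp (-(β * (N : ℝ) * h ω))) with hfdef
  have hf : Measurable f :=
    ENNReal.measurable_ofReal.comp (Real.measurable_exp.comp (measurable_const.mul hmeas).neg)
  set s : ℝ := |β| * (N : ℝ) * r with hsdef
  set t : ℝ := β * (N : ℝ) * u with htdef
  have hs0 : 0 ≤ s := by positivity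
  -- pointwise bounds on B
  have hbound : ∀ ω ∈ B, Real.exp (-t - s) ≤ Real.exp (-(β * (N : ℝ) * h ω)) ∧
      Real.exp (-(β * (N : ℝ) * h ω)) ≤ Real.exp (-t + s) := by
    intro ω hω
    have hω' : h ω ∈ Set.Icc (u - r) (u + r) := hω
    have habs : |β * (N : ℝ) * h ω - t| ≤ s := by
      have h1 : β * (N : ℝ) * h ω - t = β * (N : ℝ) * (h ω - u) := by rw [htdef]; ring
      rw [h1, hsdef, abs_mul, abs_mul, Nat.abs_cast]
      have : |h ω - u| ≤ r := abs_le.mpr ⟨by linarith [hω'.1], by linarith [hω'.2]⟩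
      gcongr
    obtain ⟨h1, h2⟩ := abs_le.mp habs
    exact ⟨Real.exp_le_exp.mpr (by linarith), Real.exp_le_exp.mpr (by linarith)⟩
  -- integral bounds
  have hlow : ∀ S : Set Ω, MeasurableSet S → S ⊆ B →
      ENNReal.ofReal (Real.exp (-t - s)) * P S ≤ ∫⁻ ω in S, f ω ∂P := by
    intro S hS hSB
    calc ENNReal.ofReal (Real.exp (-t - s)) * P S
        = ∫⁻ _ω in S, ENNReal.ofReal (Real.exp (-t - s)) ∂P := (setLIntegral_const _ _).symm
      _ ≤ ∫⁻ ω in S, f ω ∂P := setLIntegral_mono hf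
          (fun ω hω => ENNReal.ofReal_le_ofReal ((hbound ω (hSB hω)).1))
  have hup : ∀ S : Set Ω, MeasurableSet S → S ⊆ B →
      ∫⁻ ω in S, f ω ∂P ≤ ENNReal.ofReal (Real.exp (-t + s)) * P S := by
    intro S hS hSB
    calc ∫⁻ ω in S, f ω ∂P
        ≤ ∫⁻ _ω in S, ENNReal.ofReal (Real.exp (-t + s)) ∂P :=
          setLIntegral_mono measurable_const
            (fun ω hω => ENNReal.ofReal_le_ofReal ((hbound ω (hSB hω)).2))
      _ = ENNReal.ofReal (Real.exp (-t + s)) * P S := setLIntegral_const _ _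
  have hcan : ∀ S : Set Ω, MeasurableSet S → Pcan S = Z⁻¹ * ∫⁻ ω in S, f ω ∂P := by
    intro S hS
    rw [hPcan, Measure.smul_apply, withDensity_apply _ hS, smul_eq_mul]
  have hmicroA : Pmicro A = (P B)⁻¹ * P (A ∩ B) := by
    rw [hPmicro, ProbabilityTheory.cond_apply hB, Set.inter_comm]
  have hPB0 : P B ≠ 0 := hp.ne'
  have hPBtop : P B ≠ ∞ := (measure_lt_top P B).ne
  have hcancel : (P B)⁻¹ * P B = 1 := ENNReal.inv_mul_cancel hPB0 hPBtop
  have hAB : MeasurableSet (A ∩ B) := hA.inter hB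
  have hABsub : A ∩ B ⊆ B := Set.inter_subset_right
  -- exponent identities
  have hid1 : ENNReal.ofReal (Real.exp (-(2 * |β| * (N : ℝ) * r))) *
      ENNReal.ofReal (Real.exp (-t + s)) = ENNReal.ofReal (Real.exp (-t - s)) := by
    rw [← ENNReal.ofReal_mul (Real.exp_nonneg _), ← Real.exp_add]
    congr 1
    rw [hsdef]; ring
  have hid2 : ENNReal.ofReal (Real.exp (2 * |β| * (N : ℝ) * r)) *
      ENNReal.ofReal (Real.exp (-t - s)) = ENNReal.ofReal (Real.exp (-t + s)) := by
    rw [← ENNReal.ofReal_mul (Real.exp_nonneg _), ← Real.exp_add]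
    congr 1
    rw [hsdef]; ring
  constructor
  · calc ENNReal.ofReal (Real.exp (-(2 * |β| * (N : ℝ) * r))) * Pmicro A * Pcan B
        = ENNReal.ofReal (Real.exp (-(2 * |β| * (N : ℝ) * r))) * ((P B)⁻¹ * P (A ∩ B)) *
            (Z⁻¹ * ∫⁻ ω in B, f ω ∂P) := by rw [hmicroA, hcan B hB]
      _ ≤ ENNReal.ofReal (Real.exp (-(2 * |β| * (N : ℝ) * r))) * ((P B)⁻¹ * P (A ∩ B)) *
            (Z⁻¹ * (ENNReal.ofReal (Real.exp (-t + s)) * P B)) := by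
          gcongr
          exact hup B hB (fun _ hx => hx)
      _ = Z⁻¹ * ((ENNReal.ofReal (Real.exp (-(2 * |β| * (N : ℝ) * r))) *
            ENNReal.ofReal (Real.exp (-t + s))) * P (A ∩ B)) * ((P B)⁻¹ * P B) := by ring
      _ = Z⁻¹ * (ENNReal.ofReal (Real.exp (-t - s)) * P (A ∩ B)) := by
          rw [hcancel, hid1, mul_one]
      _ ≤ Z⁻¹ * ∫⁻ ω in A ∩ B, f ω ∂P := by
          gcongr
          exact hlow (A ∩ B) hAB hABsub
      _ = Pcan (A ∩ B) := (hcan (A ∩ B) hAB).symm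
  · calc Pcan (A ∩ B) = Z⁻¹ * ∫⁻ ω in A ∩ B, f ω ∂P := hcan (A ∩ B) hAB
      _ ≤ Z⁻¹ * (ENNReal.ofReal (Real.exp (-t + s)) * P (A ∩ B)) := by
          gcongr
          exact hup (A ∩ B) hAB hABsub
      _ = Z⁻¹ * ((ENNReal.ofReal (Real.exp (2 * |β| * (N : ℝ) * r)) *
            ENNReal.ofReal (Real.exp (-t - s))) * P (A ∩ B)) := by rw [hid2]
      _ = Z⁻¹ * ((ENNReal.ofReal (Real.exp (2 * |β| * (N : ℝ) * r)) *
            ENNReal.ofReal (Real.exp (-t - s))) * P (A ∩ B)) * ((P B)⁻¹ * P B) := by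
          rw [hcancel, mul_one]
      _ = ENNReal.ofReal (Real.exp (2 * |β| * (N : ℝ) * r)) * ((P B)⁻¹ * P (A ∩ B)) *
            (Z⁻¹ * (ENNReal.ofReal (Real.exp (-t - s)) * P B)) := by ring
      _ ≤ ENNReal.ofReal (Real.exp (2 * |β| * (N : ℝ) * r)) * ((P B)⁻¹ * P (A ∩ B)) *
            (Z⁻¹ * ∫⁻ ω in B, f ω ∂P) := by
          gcongr
          exact hlow B hB (fun _ hx => hx)
      _ = ENNReal.ofReal (Real.exp (2 * |β| * (N : ℝ) * r)) * Pmicro A * Pcan B := by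
          rw [hmicroA, hcan B hB]
end

section
/- Let s : ℝ → ℝ ∪ {−∞} (not identically −∞), let β ∈ ℝ with φ(β) = inf_v (β v − s(v)) finite, and set J_β(u) = β u − s(u) − φ(β) for u ∈ dom s = {v : s(v) > −∞}. Let M be a set, for each u ∈ dom s let I^u : M → [0,∞] with E^u = {m : I^u(m) = 0}, define I_β(m) = inf_{u ∈ dom s} (I^u(m) + J_β(u)) and E_β = {m : I_β(m) = 0}, and assume that for every m ∈ E_β the infimum defining I_β(m) is attained. If s is strictly concave at u₀, i.e., β ∈ ∂s(u₀) and s(v) < s(u₀) + β(v − u₀) for every v ≠ u₀, then E^{u₀} = E_β (strict macrostate equivalence). -/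
/-!
STATEMENT 8: Strict macrostate equivalence. With `φ(β) = inf_v (β v - s v)` finite,
`J_β(u) = β u - s u - φ(β)`, microcanonical rate functions `I^u : M → [0,∞]` with
equilibrium sets `E^u = {I^u = 0}`, canonical rate function
`I_β(m) = inf_{u ∈ dom s} (I^u(m) + J_β(u))` with `E_β = {I_β = 0}`, and attainment of
the infimum on `E_β`: if `s` is strictly concave at `u₀` (i.e. `β ∈ ∂s(u₀)` with strict
inequality off `u₀`), then `E^{u₀} = E_β`.
-/

open scoped ENNReal

theorem strict_macrostate_equivalence
    {M : Type*} (s : ℝ → EReal) (hs_top : ∀ v : ℝ, s v ≠ ⊤) (hne : ∃ v : ℝ, s v ≠ ⊥)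
    (β : ℝ) (φβ : ℝ) (hφ : (⨅ v : ℝ, ((β * v : ℝ) : EReal) - s v) = (φβ : EReal))
    (Iu : ℝ → M → EReal)
    (hIu_nonneg : ∀ u : ℝ, s u ≠ ⊥ → ∀ m, 0 ≤ Iu u m)
    (Iβ : M → EReal)
    (hIβ : ∀ m, Iβ m = ⨅ u ∈ {v : ℝ | s v ≠ ⊥},
      (Iu u m + (((β * u : ℝ) : EReal) - s u - (φβ : EReal))))
    (hattain : ∀ m, Iβ m = 0 → ∃ u : ℝ, s u ≠ ⊥ ∧
      Iu u m + (((β * u : ℝ) : EReal) - s u - (φβ : EReal)) = Iβ m)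
    (u₀ : ℝ)
    (hsub : ∀ v : ℝ, s v ≤ s u₀ + ((β * (v - u₀) : ℝ) : EReal))
    (hstrict : ∀ v : ℝ, v ≠ u₀ → s v < s u₀ + ((β * (v - u₀) : ℝ) : EReal)) :
    {m | Iu u₀ m = 0} = {m | Iβ m = 0} := by
  -- s u₀ is real
  have hs0_bot : s u₀ ≠ ⊥ := by
    intro h
    obtain ⟨v, hv⟩ := hne
    have := hsub v
    rw [h, EReal.bot_add] at this
    exact hv (le_bot_iff.mp this)
  obtain ⟨r, hr⟩ : ∃ r : ℝ, s u₀ = (r : EReal) :=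
    ⟨(s u₀).toReal, (EReal.coe_toReal (hs_top u₀) hs0_bot).symm⟩
  -- φβ = β u₀ - r
  have hφval : φβ = β * u₀ - r := by
    have hlow : ((β * u₀ - r : ℝ) : EReal) ≤ (⨅ v : ℝ, ((β * v : ℝ) : EReal) - s v) := by
      refine le_iInf fun v => ?_
      by_cases hv : s v = ⊥
      · rw [hv, EReal.sub_bot (EReal.coe_ne_bot _)]
        exact le_top
      · obtain ⟨t, ht⟩ : ∃ t : ℝ, s v = (t : EReal) :=
          ⟨(s v).toReal, (EReal.coe_toReal (hs_top v) hv).symm⟩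
        have := hsub v
        rw [ht, hr, ← EReal.coe_add, EReal.coe_le_coe_iff] at this
        rw [ht, ← EReal.coe_sub, EReal.coe_le_coe_iff]
        nlinarith
    have hup : (⨅ v : ℝ, ((β * v : ℝ) : EReal) - s v) ≤ ((β * u₀ - r : ℝ) : EReal) := by
      have := iInf_le (fun v : ℝ => ((β * v : ℝ) : EReal) - s v) u₀
      rwa [hr, ← EReal.coe_sub] at this
    have h2 : ((β * u₀ - r : ℝ) : EReal) = (φβ : EReal) := by
      rw [← hφ]; exact le_antisymm hlow hup
    exact (EReal.coe_eq_coe_iff.mp h2).symm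
  -- J values, for s u = t real
  have hJ : ∀ u t : ℝ, s u = (t : EReal) →
      (((β * u : ℝ) : EReal) - s u - (φβ : EReal)) = ((β * u - t - φβ : ℝ) : EReal) := by
    intro u t ht
    rw [ht, ← EReal.coe_sub, ← EReal.coe_sub]
  have hJ0 : (((β * u₀ : ℝ) : EReal) - s u₀ - (φβ : EReal)) = 0 := by
    rw [hJ u₀ r hr, hφval]
    norm_num
  have hJnonneg : ∀ u : ℝ, s u ≠ ⊥ → 0 ≤ (((β * u : ℝ) : EReal) - s u - (φβ : EReal)) := by
    intro u hu
    obtain ⟨t, ht⟩ : ∃ t : ℝ, s u = (t : EReal) :=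
      ⟨(s u).toReal, (EReal.coe_toReal (hs_top u) hu).symm⟩
    rw [hJ u t ht]
    have := hsub u
    rw [ht, hr, ← EReal.coe_add, EReal.coe_le_coe_iff] at this
    rw [hφval]
    exact_mod_cast by nlinarith
  have hJpos : ∀ u : ℝ, s u ≠ ⊥ → u ≠ u₀ →
      0 < (((β * u : ℝ) : EReal) - s u - (φβ : EReal)) := by
    intro u hu hne'
    obtain ⟨t, ht⟩ : ∃ t : ℝ, s u = (t : EReal) :=
      ⟨(s u).toReal, (EReal.coe_toReal (hs_top u) hu).symm⟩
    have := hstrict u hne'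
    rw [ht, hr, ← EReal.coe_add, EReal.coe_lt_coe_iff] at this
    rw [hJ u t ht, hφval]
    exact_mod_cast by nlinarith
  -- Iβ ≥ 0
  have hIβ_nonneg : ∀ m, 0 ≤ Iβ m := by
    intro m
    rw [hIβ m]
    exact le_iInf fun u => le_iInf fun hu =>
      add_nonneg (hIu_nonneg u hu m) (hJnonneg u hu)
  ext m
  simp only [Set.mem_setOf_eq]
  constructor
  · intro h0
    refine le_antisymm ?_ (hIβ_nonneg m)
    rw [hIβ m]
    calc (⨅ u ∈ {v : ℝ | s v ≠ ⊥},
        (Iu u m + (((β * u : ℝ) : EReal) - s u - (φβ : EReal))))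
        ≤ Iu u₀ m + (((β * u₀ : ℝ) : EReal) - s u₀ - (φβ : EReal)) :=
          biInf_le _ hs0_bot
      _ = 0 := by rw [h0, hJ0, add_zero]
  · intro h0
    obtain ⟨u, hu, hsum⟩ := hattain m h0
    rw [h0] at hsum
    have hu0 : u = u₀ := by
      by_contra hne'
      have h1 : 0 < Iu u m + (((β * u : ℝ) : EReal) - s u - (φβ : EReal)) :=
        lt_of_lt_of_le (hJpos u hu hne')
          (le_add_of_nonneg_left (hIu_nonneg u hu m))
      rw [hsum] at h1
      exact lt_irrefl _ h1
    subst hu0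
    rw [hJ0, add_zero] at hsum
    exact hsum
end

section
/- Let s : ℝ → ℝ ∪ {−∞} (not identically −∞), let M be a set, for each u ∈ dom s = {v : s(v) > −∞} let I^u : M → [0,∞] with E^u = {m : I^u(m) = 0}, and assume the sets E^u, u ∈ dom s, are pairwise disjoint. For β ∈ ℝ with φ(β) = inf_v (β v − s(v)) finite, define I_β(m) = inf_{u ∈ dom s} (I^u(m) + J_β(u)) with J_β(u) = β u − s(u) − φ(β), E_β = {m : I_β(m) = 0}, and assume that for every m ∈ E_β the infimum defining I_β(m) is attained. If u₀ ∈ dom s is a nonconcave point of s, i.e., ∂s(u₀) = ∅ (s admits no supporting line at u₀), then E^{u₀} ∩ E_β = ∅ for every β ∈ ℝ with φ(β) finite (macrostate nonequivalence). -/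
/-!
If `m ∈ E_β`, the infimum defining `I_β(m) = 0` is attained at some `u ∈ dom s`. Both summands
`I^u(m)` and `J_β(u)` are nonnegative, so both vanish: `m ∈ E^u`, which by disjointness forces
`u = u₀`, and `J_β(u₀) = 0` says that `u₀` minimises `v ↦ β v − s(v)`, i.e. that the line of
slope `β` through `(u₀, s(u₀))` supports `s`. This contradicts `∂s(u₀) = ∅`.
-/

/-- `β ∈ ∂s(u)`. -/
def IsSupergradient (s : ℝ → EReal) (u β : ℝ) : Prop :=
  ∀ v : ℝ, s v ≤ s u + ((β * (v - u) : ℝ) : EReal)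

theorem EReal.le_add_coe_sub_of_coe_sub_le_coe_sub {p q : ℝ} {a b : EReal}
    (h : (p : EReal) - a ≤ q - b) : b ≤ a + ((q - p : ℝ) : EReal) := by
  induction a using EReal.rec with
  | top => exact (EReal.top_add_coe _).symm ▸ le_top
  | bot =>
    induction b using EReal.rec with
    | bot => exact bot_le
    | top => simp at h
    | coe w => simp [← EReal.coe_sub] at h
  | coe r =>
    induction b using EReal.rec with
    | bot => exact bot_le
    | top => simp [← EReal.coe_sub] at h
    | coe w =>
      norm_cast at h ⊢
      linarith

theorem isSupergradient_of_isMinOn {s : ℝ → EReal} {u β : ℝ}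
    (hmin : IsMinOn (fun v : ℝ => ((β * v : ℝ) : EReal) - s v) Set.univ u) :
    IsSupergradient s u β := fun v => by
  simpa only [mul_sub] using
    EReal.le_add_coe_sub_of_coe_sub_le_coe_sub (hmin (Set.mem_univ v))

theorem macrostate_nonequivalence_general
    {M : Type*} (s : ℝ → EReal)
    (Iu : ℝ → M → EReal)
    (hIu_nonneg : ∀ u : ℝ, s u ≠ ⊥ → ∀ m, 0 ≤ Iu u m)
    (hdisj : ∀ u v : ℝ, s u ≠ ⊥ → s v ≠ ⊥ → u ≠ v →
      {m | Iu u m = 0} ∩ {m | Iu v m = 0} = ∅)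
    (Iβ : ℝ → M → EReal)
    (hattain : ∀ β φβ : ℝ, (⨅ v : ℝ, ((β * v : ℝ) : EReal) - s v) = (φβ : EReal) →
      ∀ m, Iβ β m = 0 → ∃ u : ℝ, s u ≠ ⊥ ∧
        Iu u m + (((β * u : ℝ) : EReal) - s u - (φβ : EReal)) = Iβ β m)
    (u₀ : ℝ) (hu₀ : s u₀ ≠ ⊥)
    (hnc : ∀ β : ℝ, ¬ ∀ v : ℝ, s v ≤ s u₀ + ((β * (v - u₀) : ℝ) : EReal)) :
    ∀ β φβ : ℝ, (⨅ v : ℝ, ((β * v : ℝ) : EReal) - s v) = (φβ : EReal) →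
      {m | Iu u₀ m = 0} ∩ {m | Iβ β m = 0} = ∅ := by
  intro β φβ hφ
  refine Set.eq_empty_of_forall_notMem fun m ⟨hm₀, hmβ⟩ => ?_
  obtain ⟨u, hu, hsum⟩ := hattain β φβ hφ m hmβ
  have hφ_le (v : ℝ) : (φβ : EReal) ≤ ((β * v : ℝ) : EReal) - s v := hφ ▸ iInf_le _ v
  have hJ_nonneg : 0 ≤ ((β * u : ℝ) : EReal) - s u - φβ :=
    (EReal.sub_nonneg (.inr (EReal.coe_ne_top _)) (.inr (EReal.coe_ne_bot _))).2 (hφ_le u)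
  obtain ⟨hmu, hJ⟩ :=
    (add_eq_zero_iff_of_nonneg (hIu_nonneg u hu m) hJ_nonneg).1 (hsum.trans hmβ)
  obtain rfl : u = u₀ := by
    by_contra hne
    exact (Set.eq_empty_iff_forall_notMem.1 (hdisj u u₀ hu hu₀ hne)) m ⟨hmu, hm₀⟩
  have hJ' : ((β * u : ℝ) : EReal) - s u = φβ := by
    rw [← EReal.sub_add_cancel (a := ((β * u : ℝ) : EReal) - s u) (b := φβ), hJ, zero_add]
  exact hnc β (isSupergradient_of_isMinOn fun v _ => hJ'.trans_le (hφ_le v))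

theorem macrostate_nonequivalence
    {M : Type*} (s : ℝ → EReal) (hs_top : ∀ v : ℝ, s v ≠ ⊤) (hne : ∃ v : ℝ, s v ≠ ⊥)
    (Iu : ℝ → M → EReal)
    (hIu_nonneg : ∀ u : ℝ, s u ≠ ⊥ → ∀ m, 0 ≤ Iu u m)
    (hdisj : ∀ u v : ℝ, s u ≠ ⊥ → s v ≠ ⊥ → u ≠ v →
      {m | Iu u m = 0} ∩ {m | Iu v m = 0} = ∅)
    (Iβ : ℝ → M → EReal)
    (hIβ : ∀ β φβ : ℝ, (⨅ v : ℝ, ((β * v : ℝ) : EReal) - s v) = (φβ : EReal) →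
      ∀ m, Iβ β m = ⨅ u ∈ {v : ℝ | s v ≠ ⊥},
        (Iu u m + (((β * u : ℝ) : EReal) - s u - (φβ : EReal))))
    (hattain : ∀ β φβ : ℝ, (⨅ v : ℝ, ((β * v : ℝ) : EReal) - s v) = (φβ : EReal) →
      ∀ m, Iβ β m = 0 → ∃ u : ℝ, s u ≠ ⊥ ∧
        Iu u m + (((β * u : ℝ) : EReal) - s u - (φβ : EReal)) = Iβ β m)
    (u₀ : ℝ) (hu₀ : s u₀ ≠ ⊥)
    (hnc : ∀ β : ℝ, ¬ ∀ v : ℝ, s v ≤ s u₀ + ((β * (v - u₀) : ℝ) : EReal)) :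
    ∀ β φβ : ℝ, (⨅ v : ℝ, ((β * v : ℝ) : EReal) - s v) = (φβ : EReal) →
      {m | Iu u₀ m = 0} ∩ {m | Iβ β m = 0} = ∅ :=
  macrostate_nonequivalence_general s Iu hIu_nonneg hdisj Iβ hattain u₀ hu₀ hnc
end

section
/- Let s : ℝ → ℝ ∪ {−∞} (not identically −∞), let β ∈ ℝ with φ(β) = inf_v (β v − s(v)) finite, let M be a set, for each u ∈ dom s = {v : s(v) > −∞} let I^u : M → [0,∞] with E^u = {m : I^u(m) = 0}, and define I_β(m) = inf_{u ∈ dom s} (I^u(m) + J_β(u)) with J_β(u) = β u − s(u) − φ(β) and E_β = {m : I_β(m) = 0}. If β ∈ ∂s(u₀) (so that s is concave, possibly non-strictly, at u₀), then E^{u₀} ⊆ E_β (partial macrostate equivalence). -/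
/-!
STATEMENT 10: Partial macrostate equivalence. With `φ(β) = inf_v (β v - s v)` finite,
`J_β(u) = β u - s u - φ(β)`, microcanonical rate functions `I^u : M → [0,∞]` with
equilibrium sets `E^u = {I^u = 0}`, and canonical rate function
`I_β(m) = inf_{u ∈ dom s} (I^u(m) + J_β(u))` with `E_β = {I_β = 0}`: if `β ∈ ∂s(u₀)`
(so `s` is concave, possibly non-strictly, at `u₀`), then `E^{u₀} ⊆ E_β`.
-/

open scoped ENNReal

theorem partial_macrostate_equivalence
    {M : Type*} (s : ℝ → EReal) (hs_top : ∀ v : ℝ, s v ≠ ⊤) (hne : ∃ v : ℝ, s v ≠ ⊥)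
    (β : ℝ) (φβ : ℝ) (hφ : (⨅ v : ℝ, ((β * v : ℝ) : EReal) - s v) = (φβ : EReal))
    (Iu : ℝ → M → EReal)
    (hIu_nonneg : ∀ u : ℝ, s u ≠ ⊥ → ∀ m, 0 ≤ Iu u m)
    (Iβ : M → EReal)
    (hIβ : ∀ m, Iβ m = ⨅ u ∈ {v : ℝ | s v ≠ ⊥},
      (Iu u m + (((β * u : ℝ) : EReal) - s u - (φβ : EReal))))
    (u₀ : ℝ)
    (hsub : ∀ v : ℝ, s v ≤ s u₀ + ((β * (v - u₀) : ℝ) : EReal)) :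
    {m | Iu u₀ m = 0} ⊆ {m | Iβ m = 0} := by
  -- s u₀ ≠ ⊥
  obtain ⟨v0, hv0⟩ := hne
  have hbot : s u₀ ≠ ⊥ := by
    intro h
    apply hv0
    have := hsub v0
    rw [h, EReal.bot_add] at this
    exact le_bot_iff.mp this
  obtain ⟨r, hr⟩ := (EReal.canLift.prf (s u₀) ⟨hs_top u₀, hbot⟩)
  -- φβ ≤ β u₀ - r
  have h1 : (φβ : EReal) ≤ ((β * u₀ - r : ℝ) : EReal) := by
    rw [← hφ]
    refine le_trans (iInf_le _ u₀) ?_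
    rw [← hr, EReal.coe_sub]
  -- β u₀ - r ≤ φβ
  have h2 : ((β * u₀ - r : ℝ) : EReal) ≤ (φβ : EReal) := by
    rw [← hφ]
    refine le_iInf fun v => ?_
    by_cases hv : s v = ⊥
    · rw [hv, EReal.coe_sub_bot]
      exact le_top
    · obtain ⟨t, ht⟩ := EReal.canLift.prf (s v) ⟨hs_top v, hv⟩
      have hsv : (t : EReal) ≤ ((r + β * (v - u₀) : ℝ) : EReal) := by
        have := hsub v
        rw [← ht, ← hr, ← EReal.coe_add] at this
        exact this
      rw [← ht, ← EReal.coe_sub, EReal.coe_le_coe_iff]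
      have hle : t ≤ r + β * (v - u₀) := by exact_mod_cast hsv
      nlinarith [hle]
  have hφr : φβ = β * u₀ - r := by
    exact_mod_cast (le_antisymm h2 h1).symm
  -- J_β(u₀) = 0
  have hJ0 : ((β * u₀ : ℝ) : EReal) - s u₀ - (φβ : EReal) = 0 := by
    rw [← hr, ← EReal.coe_sub, ← EReal.coe_sub, hφr]
    norm_num
  intro m hm
  simp only [Set.mem_setOf_eq] at hm ⊢
  rw [hIβ]
  apply le_antisymm
  · calc ⨅ u ∈ {v : ℝ | s v ≠ ⊥},
        (Iu u m + (((β * u : ℝ) : EReal) - s u - (φβ : EReal)))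
        ≤ Iu u₀ m + (((β * u₀ : ℝ) : EReal) - s u₀ - (φβ : EReal)) := iInf₂_le u₀ hbot
      _ = 0 := by rw [hm, hJ0, zero_add]
  · refine le_iInf₂ fun u hu => ?_
    have hJ : (0 : EReal) ≤ ((β * u : ℝ) : EReal) - s u - (φβ : EReal) := by
      have hle : (φβ : EReal) ≤ ((β * u : ℝ) : EReal) - s u := by
        rw [← hφ]; exact iInf_le _ u
      have h0 : (0 : EReal) = (φβ : EReal) - (φβ : EReal) := by
        rw [← EReal.coe_sub]; norm_num
      rw [h0]
      exact EReal.sub_le_sub hle le_rfl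
    exact add_nonneg (hIu_nonneg u hu m) hJ
end

section
/- Let s : ℝ → ℝ ∪ {−∞} be upper semicontinuous with nonempty compact domain dom s = {v : s(v) > −∞}. If there exists u₀ with s(u₀) < s**(u₀) (s is nonconcave at u₀), then there exist β_c ∈ ℝ and u₁ ≠ u₂ in dom s such that both u₁ and u₂ are global minimizers of v ↦ β_c v − s(v); equivalently, J_{β_c}(u₁) = J_{β_c}(u₂) = 0, so that the canonical ensemble at β_c has at least two coexisting equilibrium mean-energy values. -/
/-!
STATEMENT 11: Coexistence from nonconcavity. Let `s : ℝ → ℝ ∪ {-∞}` be upper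
semicontinuous with nonempty compact domain. If `s(u₀) < s**(u₀)` for some `u₀`
(`s**(u) = inf_γ (γ u - φ(γ))` with `φ(γ) = inf_v (γ v - s v)`), then there exist
`β_c ∈ ℝ` and `u₁ ≠ u₂` in `dom s` that are both global minimizers of
`v ↦ β_c v - s v` (i.e. `J_{β_c}(u₁) = J_{β_c}(u₂) = 0`): the canonical ensemble at
`β_c` has at least two coexisting equilibrium mean-energy values.
-/

open scoped ENNReal

open Filter Topology Set

/-- A "sequentially lower semicontinuous" real function on a nonempty compact
subset of ℝ attains its minimum. -/
lemma lsc_attains_min {f : ℝ → ℝ} {D : Set ℝ} (hD : IsCompact D) (hne : D.Nonempty)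
    (hf : ∀ x ∈ D, ∀ y < f x, ∀ᶠ v in 𝓝[D] x, y < f v) :
    ∃ x ∈ D, ∀ w ∈ D, f x ≤ f w := by
  -- first: f is bounded below on D
  have hbdd : BddBelow (f '' D) := by
    by_contra hb
    have : ∀ n : ℕ, ∃ x ∈ D, f x < -(n : ℝ) := by
      intro n
      rcases not_bddBelow_iff.1 hb (-(n:ℝ)) with ⟨_, ⟨x, hx, rfl⟩, hlt⟩
      exact ⟨x, hx, hlt⟩
    choose x hxD hxlt using this
    obtain ⟨c, hcD, φ, hφ, hconv⟩ := hD.tendsto_subseq hxD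
    have hconv' : Tendsto (x ∘ φ) atTop (𝓝[D] c) :=
      tendsto_nhdsWithin_iff.2 ⟨hconv, Eventually.of_forall fun n => hxD _⟩
    have h1 : ∀ᶠ n in atTop, f c - 1 < f (x (φ n)) :=
      hconv' (hf c hcD (f c - 1) (by linarith))
    have h2 : ∀ᶠ n in atTop, f (x (φ n)) < f c - 1 := by
      filter_upwards [eventually_ge_atTop (Nat.ceil (-(f c - 1)))] with n hn
      have : (Nat.ceil (-(f c - 1)) : ℝ) ≤ (φ n : ℝ) := by
        exact_mod_cast le_trans hn (hφ.id_le n)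
      have := Nat.le_ceil (-(f c - 1))
      have := hxlt (φ n)
      linarith
    rcases (h1.and h2).exists with ⟨n, hn1, hn2⟩
    linarith
  set m := sInf (f '' D) with hm
  have hmle : ∀ w ∈ D, m ≤ f w := fun w hw => csInf_le hbdd ⟨w, hw, rfl⟩
  have hseq : ∀ n : ℕ, ∃ x ∈ D, f x < m + 1 / (n + 1) := by
    intro n
    have hpos : (0:ℝ) < 1 / (n + 1) := by positivity
    obtain ⟨y, ⟨x, hx, rfl⟩, hy⟩ :=
      exists_lt_of_csInf_lt (hne.image f) (by linarith : m < m + 1 / (n+1))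
    exact ⟨x, hx, hy⟩
  choose x hxD hxlt using hseq
  obtain ⟨c, hcD, φ, hφ, hconv⟩ := hD.tendsto_subseq hxD
  refine ⟨c, hcD, fun w hw => ?_⟩
  by_contra hcon
  push_neg at hcon
  have hmc : m < f c := lt_of_le_of_lt (hmle w hw) hcon
  have hconv' : Tendsto (x ∘ φ) atTop (𝓝[D] c) :=
    tendsto_nhdsWithin_iff.2 ⟨hconv, Eventually.of_forall fun n => hxD _⟩
  obtain ⟨y, hy1, hy2⟩ := exists_between hmc
  have h1 : ∀ᶠ n in atTop, y < f (x (φ n)) := hconv' (hf c hcD y hy2)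
  have h2 : ∀ᶠ n in atTop, f (x (φ n)) < y := by
    have htend : Tendsto (fun n : ℕ => m + 1 / ((φ n : ℝ) + 1)) atTop (𝓝 (m + 0)) := by
      refine Tendsto.const_add m ?_
      apply tendsto_one_div_add_atTop_nhds_zero_nat.comp
      exact hφ.tendsto_atTop
    rw [add_zero] at htend
    filter_upwards [htend.eventually_lt_const hy1] with n hn
    exact lt_trans (hxlt (φ n)) hn
  rcases (h1.and h2).exists with ⟨n, hn1, hn2⟩
  linarith

theorem coexistence_from_nonconcave_entropy
    (s : ℝ → EReal) (hs_top : ∀ v : ℝ, s v ≠ ⊤)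
    (husc : UpperSemicontinuous s)
    (hdom_ne : {v : ℝ | s v ≠ ⊥}.Nonempty)
    (hdom_cpt : IsCompact {v : ℝ | s v ≠ ⊥})
    (hnc : ∃ u₀ : ℝ, s u₀ <
      ⨅ γ : ℝ, ((γ * u₀ : ℝ) : EReal) - (⨅ v : ℝ, ((γ * v : ℝ) : EReal) - s v)) :
    ∃ βc u₁ u₂ : ℝ, u₁ ≠ u₂ ∧ s u₁ ≠ ⊥ ∧ s u₂ ≠ ⊥ ∧
      (∀ v : ℝ, ((βc * u₁ : ℝ) : EReal) - s u₁ ≤ ((βc * v : ℝ) : EReal) - s v) ∧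
      (∀ v : ℝ, ((βc * u₂ : ℝ) : EReal) - s u₂ ≤ ((βc * v : ℝ) : EReal) - s v) := by
  obtain ⟨u₀, hu₀⟩ := hnc
  set D : Set ℝ := {v : ℝ | s v ≠ ⊥} with hD
  set sr : ℝ → ℝ := fun v => (s v).toReal with hsr
  have hsrD : ∀ v ∈ D, s v = ((sr v : ℝ) : EReal) := by
    intro v hv
    exact (EReal.coe_toReal (hs_top v) hv).symm
  -- sequential usc of sr on D
  have husr : ∀ x ∈ D, ∀ y : ℝ, sr x < y → ∀ᶠ v in 𝓝[D] x, sr v < y := by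
    intro x hx y hy
    have h1 : s x < (y : EReal) := by rw [hsrD x hx]; exact_mod_cast hy
    have h2 : ∀ᶠ v in 𝓝 x, s v < (y : EReal) := husc x _ h1
    filter_upwards [nhdsWithin_le_nhds h2, self_mem_nhdsWithin] with v hv hvD
    rw [hsrD v hvD] at hv
    exact_mod_cast hv
  -- minimizers of v ↦ γ v - s v
  have hminex : ∀ γ : ℝ, ∃ x ∈ D, ∀ w ∈ D, γ * x - sr x ≤ γ * w - sr w := by
    intro γ
    apply lsc_attains_min hdom_cpt hdom_ne
    intro x hx y hy
    set ε := γ * x - sr x - y with hε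
    have hεpos : 0 < ε := by simp only [hε]; linarith
    have hc : ∀ᶠ v in 𝓝[D] x, |γ * v - γ * x| < ε / 2 := by
      apply nhdsWithin_le_nhds
      have hcm : Continuous fun v : ℝ => γ * v := continuous_const.mul continuous_id
      exact (hcm.tendsto x).eventually (eventually_abs_sub_lt (γ * x) (half_pos hεpos))
    filter_upwards [hc, husr x hx (sr x + ε / 2) (by linarith)] with v h1 h2
    have := abs_lt.1 h1
    simp only [hε] at *
    linarith
  choose vm hvmD hvmin using hminex
  set φr : ℝ → ℝ := fun γ => γ * vm γ - sr (vm γ) with hφr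
  -- upper bound M for sr on D
  obtain ⟨xM, hxM, hMmin⟩ : ∃ x ∈ D, ∀ w ∈ D, -sr x ≤ -sr w := by
    apply lsc_attains_min hdom_cpt hdom_ne
    intro x hx y hy
    filter_upwards [husr x hx (-y) (by linarith)] with v hv
    linarith
  set M : ℝ := sr xM with hM
  have hMle : ∀ w ∈ D, sr w ≤ M := fun w hw => by have := hMmin w hw; simp only [hM]; linarith
  -- endpoints
  set a : ℝ := sInf D with ha
  set b : ℝ := sSup D with hb
  have haD : a ∈ D := hdom_cpt.sInf_mem hdom_ne
  have hbD : b ∈ D := hdom_cpt.sSup_mem hdom_ne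
  have ha_le : ∀ v ∈ D, a ≤ v := fun v hv => csInf_le hdom_cpt.bddBelow hv
  have hb_ge : ∀ v ∈ D, v ≤ b := fun v hv => le_csSup hdom_cpt.bddAbove hv
  -- bound C on |v| for v ∈ D
  obtain ⟨C, hC0, hCb⟩ : ∃ C : ℝ, 0 ≤ C ∧ ∀ v ∈ D, |v| ≤ C := by
    obtain ⟨C, hC⟩ := hdom_cpt.isBounded.subset_closedBall 0
    refine ⟨max C 0, le_max_right _ _, fun v hv => ?_⟩
    have := hC hv
    rw [Metric.mem_closedBall, Real.dist_eq, sub_zero] at this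
    exact le_trans this (le_max_left _ _)
  -- Lipschitz continuity of φr
  have hφle : ∀ γ γ' : ℝ, φr γ' ≤ φr γ + (γ' - γ) * vm γ := by
    intro γ γ'
    have := hvmin γ' (vm γ) (hvmD γ)
    simp only [hφr]
    linarith
  have hφcont : Continuous φr := by
    have : LipschitzWith (Real.toNNReal C) φr := by
      apply LipschitzWith.of_dist_le_mul
      intro γ γ'
      rw [Real.dist_eq, Real.dist_eq, Real.coe_toNNReal C hC0]
      have h1 := hφle γ' γ
      have h2 := hφle γ γ'
      have b1 : |(γ - γ') * vm γ'| ≤ |γ - γ'| * C := by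
        rw [abs_mul]
        exact mul_le_mul_of_nonneg_left (hCb _ (hvmD γ')) (abs_nonneg _)
      have b2 : |(γ' - γ) * vm γ| ≤ |γ' - γ| * C := by
        rw [abs_mul]
        exact mul_le_mul_of_nonneg_left (hCb _ (hvmD γ)) (abs_nonneg _)
      rw [abs_sub_comm γ' γ] at b2
      have hcomm : C * |γ - γ'| = |γ - γ'| * C := mul_comm _ _
      rw [abs_le]
      constructor
      · have := le_abs_self ((γ' - γ) * vm γ); linarith
      · have := le_abs_self ((γ - γ') * vm γ'); linarith
    exact this.continuous
  -- rewrite the inner infimum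
  have hinner : ∀ γ : ℝ, (⨅ v : ℝ, ((γ * v : ℝ) : EReal) - s v) = ((φr γ : ℝ) : EReal) := by
    intro γ
    apply le_antisymm
    · apply iInf_le_of_le (vm γ)
      rw [hsrD _ (hvmD γ), ← EReal.coe_sub]
    · apply le_iInf
      intro v
      by_cases hv : v ∈ D
      · rw [hsrD v hv, ← EReal.coe_sub, EReal.coe_le_coe_iff]
        exact hvmin γ v hv
      · have : s v = ⊥ := not_not.1 hv
        rw [this, EReal.coe_sub_bot]
        exact le_top
  set h : ℝ → ℝ := fun γ => γ * u₀ - φr γ with hh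
  have hnc' : s u₀ < ⨅ γ : ℝ, ((h γ : ℝ) : EReal) := by
    simp only [hh]
    simp only [hinner, ← EReal.coe_sub] at hu₀
    exact hu₀
  -- lower bound for h
  have hlow : ∀ γ : ℝ, ∀ w ∈ D, sr w + γ * (u₀ - w) ≤ h γ := by
    intro γ w hw
    have := hvmin γ w hw
    simp only [hh, hφr]
    nlinarith [this]
  -- extract a real strict lower bound xr for h with s u₀ < xr
  obtain ⟨xr, hxr1, hxr2⟩ : ∃ xr : ℝ, s u₀ < (xr : EReal) ∧ ∀ γ : ℝ, xr < h γ := by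
    obtain ⟨x, hx1, hx2⟩ := exists_between hnc'
    have hxtop : x ≠ ⊤ := by
      intro hx
      rw [hx] at hx2
      exact absurd (lt_of_lt_of_le hx2 (iInf_le _ 0)) (by simp)
    have hxbot : x ≠ ⊥ := fun hx => by rw [hx] at hx1; simp at hx1
    refine ⟨x.toReal, ?_, ?_⟩
    · rwa [EReal.coe_toReal hxtop hxbot]
    · intro γ
      have : x < ((h γ : ℝ) : EReal) := lt_of_lt_of_le hx2 (iInf_le _ γ)
      rw [← EReal.coe_toReal hxtop hxbot] at this
      exact_mod_cast this
  -- key boundary estimate at a (for γ → +∞)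
  have keyA : ∀ ε : ℝ, 0 < ε → ∃ Γ : ℝ, ∀ γ ≥ Γ, γ * a - φr γ ≤ sr a + ε := by
    intro ε hε
    obtain ⟨δ, hδ, hball⟩ := Metric.mem_nhdsWithin_iff.1 (husr a haD (sr a + ε) (by linarith))
    refine ⟨max 1 ((M - sr a) / δ + 1), fun γ hγ => ?_⟩
    have hγ1 : (1:ℝ) ≤ γ := le_trans (le_max_left _ _) hγ
    have hγ2 : (M - sr a) / δ + 1 ≤ γ := le_trans (le_max_right _ _) hγ
    set w := vm γ with hw
    have hw1 : γ * w - sr w ≤ γ * a - sr a := hvmin γ a haD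
    have hwa : a ≤ w := ha_le w (hvmD γ)
    have hwM : sr w ≤ M := hMle w (hvmD γ)
    have hMa : sr a ≤ M := hMle a haD
    have hd : (M - sr a) / δ * δ = M - sr a := div_mul_cancel₀ _ (ne_of_gt hδ)
    have hwδ : w - a < δ := by
      by_contra hcon
      push_neg at hcon
      have h1 : γ * δ ≤ γ * (w - a) := mul_le_mul_of_nonneg_left hcon (by linarith)
      have h2 : ((M - sr a) / δ + 1) * δ ≤ γ * δ :=
        mul_le_mul_of_nonneg_right hγ2 (le_of_lt hδ)
      nlinarith
    have hmem : w ∈ Metric.ball a δ ∩ D := by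
      refine ⟨?_, hvmD γ⟩
      rw [Metric.mem_ball, Real.dist_eq, abs_of_nonneg (by linarith)]
      exact hwδ
    have hsw : sr w < sr a + ε := hball hmem
    have hprod : 0 ≤ γ * (w - a) := mul_nonneg (by linarith) (by linarith)
    have hexp : γ * a - φr γ = sr w - γ * (w - a) := by simp only [hφr, ← hw]; ring
    linarith
  -- key boundary estimate at b (for γ → -∞)
  have keyB : ∀ ε : ℝ, 0 < ε → ∃ Γ : ℝ, ∀ γ ≤ Γ, γ * b - φr γ ≤ sr b + ε := by
    intro ε hε
    obtain ⟨δ, hδ, hball⟩ := Metric.mem_nhdsWithin_iff.1 (husr b hbD (sr b + ε) (by linarith))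
    refine ⟨min (-1) (-((M - sr b) / δ + 1)), fun γ hγ => ?_⟩
    have hγ1 : γ ≤ -1 := le_trans hγ (min_le_left _ _)
    have hγ2 : γ ≤ -((M - sr b) / δ + 1) := le_trans hγ (min_le_right _ _)
    set w := vm γ with hw
    have hw1 : γ * w - sr w ≤ γ * b - sr b := hvmin γ b hbD
    have hwb : w ≤ b := hb_ge w (hvmD γ)
    have hwM : sr w ≤ M := hMle w (hvmD γ)
    have hMb : sr b ≤ M := hMle b hbD
    have hd : (M - sr b) / δ * δ = M - sr b := div_mul_cancel₀ _ (ne_of_gt hδ)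
    have hwδ : b - w < δ := by
      by_contra hcon
      push_neg at hcon
      have h1 : (-γ) * δ ≤ (-γ) * (b - w) := mul_le_mul_of_nonneg_left hcon (by linarith)
      have h2 : ((M - sr b) / δ + 1) * δ ≤ (-γ) * δ :=
        mul_le_mul_of_nonneg_right (by linarith) (le_of_lt hδ)
      nlinarith
    have hmem : w ∈ Metric.ball b δ ∩ D := by
      refine ⟨?_, hvmD γ⟩
      rw [Metric.mem_ball, Real.dist_eq, abs_of_nonpos (by linarith), neg_sub]
      exact hwδ
    have hsw : sr w < sr b + ε := hball hmem
    have hprod : γ * (b - w) ≤ 0 := mul_nonpos_of_nonpos_of_nonneg (by linarith) (by linarith)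
    have hexp : γ * b - φr γ = sr w + γ * (b - w) := by simp only [hφr, ← hw]; ring
    linarith
  -- u₀ must lie strictly between a and b
  have hau : a < u₀ := by
    by_contra hcon
    push_neg at hcon
    rcases eq_or_lt_of_le hcon with heq | hlt
    · -- u₀ = a
      have hsa : sr a < xr := by
        have h1 : s u₀ < (xr : EReal) := hxr1
        have hu₀D : u₀ ∈ D := by rw [heq]; exact haD
        rw [hsrD u₀ hu₀D] at h1
        have h2 : sr u₀ < xr := by exact_mod_cast h1
        rwa [heq] at h2
      obtain ⟨Γ, hΓ⟩ := keyA ((xr - sr a) / 2) (by linarith)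
      have h1 := hΓ Γ le_rfl
      have h2 := hxr2 Γ
      have h3 : h Γ = Γ * a - φr Γ := by simp only [hh]; rw [heq]
      rw [h3] at h2
      have h4 : xr < sr a + (xr - sr a) / 2 := lt_of_lt_of_le h2 h1
      linarith [hsa, h4]
    · -- u₀ < a
      obtain ⟨Γ, hΓ⟩ := keyA 1 one_pos
      set q := (xr - sr a - 1) / (u₀ - a) with hq
      set γ := max Γ (q + 1) with hγdef
      have hγΓ : Γ ≤ γ := le_max_left _ _
      have hγq : q + 1 ≤ γ := le_max_right _ _
      have hqm : q * (u₀ - a) = xr - sr a - 1 :=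
        div_mul_cancel₀ _ (by linarith : u₀ - a ≠ 0)
      have hmul : γ * (u₀ - a) < q * (u₀ - a) :=
        mul_lt_mul_of_neg_right (by linarith) (by linarith)
      have hexp : h γ = γ * (u₀ - a) + (γ * a - φr γ) := by simp only [hh]; ring
      have := hΓ γ hγΓ
      have := hxr2 γ
      linarith
  have hub : u₀ < b := by
    by_contra hcon
    push_neg at hcon
    rcases eq_or_lt_of_le hcon with heq | hlt
    · -- u₀ = b
      have hsb : sr b < xr := by
        have h1 : s u₀ < (xr : EReal) := hxr1
        rw [← heq, hsrD b hbD] at h1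
        exact_mod_cast h1
      obtain ⟨Γ, hΓ⟩ := keyB ((xr - sr b) / 2) (by linarith)
      have h1 := hΓ Γ le_rfl
      have h2 := hxr2 Γ
      have h3 : h Γ = Γ * b - φr Γ := by simp only [hh]; rw [← heq]
      rw [h3] at h2
      have h4 : xr < sr b + (xr - sr b) / 2 := lt_of_lt_of_le h2 h1
      linarith [hsb, h4]
    · -- b < u₀
      obtain ⟨Γ, hΓ⟩ := keyB 1 one_pos
      set q := (xr - sr b - 1) / (u₀ - b) with hq
      set γ := min Γ (q - 1) with hγdef
      have hγΓ : γ ≤ Γ := min_le_left _ _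
      have hγq : γ ≤ q - 1 := min_le_right _ _
      have hqm : q * (u₀ - b) = xr - sr b - 1 :=
        div_mul_cancel₀ _ (by linarith : u₀ - b ≠ 0)
      have hmul : γ * (u₀ - b) < q * (u₀ - b) := by
        have : γ < q := by linarith
        nlinarith
      have hexp : h γ = γ * (u₀ - b) + (γ * b - φr γ) := by simp only [hh]; ring
      have := hΓ γ hγΓ
      have := hxr2 γ
      linarith
  -- h attains a global minimum
  obtain ⟨βc, hβglob⟩ : ∃ βc : ℝ, ∀ γ : ℝ, h βc ≤ h γ := by
    have hcont : Continuous h := by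
      simp only [hh]
      exact (continuous_id.mul continuous_const).sub hφcont
    set R₁ : ℝ := (h 0 + 1 - sr a) / (u₀ - a) with hR₁
    set R₂ : ℝ := (h 0 + 1 - sr b) / (u₀ - b) with hR₂
    set R : ℝ := max 1 (max R₁ (-R₂)) with hR
    have hR1 : (1:ℝ) ≤ R := le_max_left _ _
    have h0mem : (0:ℝ) ∈ Set.Icc (-R) R := ⟨by linarith, by linarith⟩
    obtain ⟨βc, hβmem, hβmin⟩ :=
      isCompact_Icc.exists_isMinOn ⟨0, h0mem⟩ hcont.continuousOn
    refine ⟨βc, fun γ => ?_⟩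
    by_cases hγ : γ ∈ Set.Icc (-R) R
    · exact hβmin hγ
    · have hβ0 : h βc ≤ h 0 := hβmin h0mem
      rw [Set.mem_Icc, not_and_or] at hγ
      rcases hγ with hγ | hγ
      · -- γ < -R
        push_neg at hγ
        have hγR : γ < -R := by linarith
        have hγR₂ : γ ≤ R₂ := by
          have : -R ≤ R₂ := by
            have := le_trans (le_max_right _ _) (le_max_right 1 (max R₁ (-R₂)))
            linarith
          linarith
        have hqm : R₂ * (u₀ - b) = h 0 + 1 - sr b :=
          div_mul_cancel₀ _ (by linarith : u₀ - b ≠ 0)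
        have hmul : R₂ * (u₀ - b) ≤ γ * (u₀ - b) :=
          mul_le_mul_of_nonpos_right hγR₂ (by linarith)
        have := hlow γ b hbD
        linarith
      · -- γ > R
        push_neg at hγ
        have hγR₁ : R₁ ≤ γ := by
          have : R₁ ≤ R := le_trans (le_max_left _ _) (le_max_right 1 (max R₁ (-R₂)))
          linarith
        have hqm : R₁ * (u₀ - a) = h 0 + 1 - sr a :=
          div_mul_cancel₀ _ (by linarith : u₀ - a ≠ 0)
        have hmul : R₁ * (u₀ - a) ≤ γ * (u₀ - a) :=
          mul_le_mul_of_nonneg_right hγR₁ (by linarith)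
        have := hlow γ a haD
        linarith
  -- straddle inequality
  have hside : ∀ γ : ℝ, (βc - γ) * (u₀ - vm γ) ≤ 0 := by
    intro γ
    have h1 := hβglob γ
    have h2 := hlow βc (vm γ) (hvmD γ)
    simp only [hh, hφr] at *
    nlinarith
  -- cluster point construction
  have hcluster : ∀ γn : ℕ → ℝ, Tendsto γn atTop (𝓝 βc) →
      ∃ c ∈ D, (∀ w ∈ D, βc * c - sr c ≤ βc * w - sr w) ∧
        ∃ φ : ℕ → ℕ, StrictMono φ ∧ Tendsto (fun n => vm (γn (φ n))) atTop (𝓝 c) := by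
    intro γn hγn
    have hwD : ∀ n, vm (γn n) ∈ D := fun n => hvmD _
    obtain ⟨c, hcD, φ, hφm, hconv⟩ := hdom_cpt.tendsto_subseq hwD
    have hconv : Tendsto (fun n => vm (γn (φ n))) atTop (𝓝 c) := hconv
    have hγφ : Tendsto (fun n => γn (φ n)) atTop (𝓝 βc) := hγn.comp hφm.tendsto_atTop
    have hsrconv : Tendsto (fun n => sr (vm (γn (φ n)))) atTop (𝓝 (βc * c - φr βc)) := by
      have ht : Tendsto (fun n => γn (φ n) * vm (γn (φ n)) - φr (γn (φ n))) atTop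
          (𝓝 (βc * c - φr βc)) :=
        (hγφ.mul hconv).sub ((hφcont.tendsto βc).comp hγφ)
      exact ht.congr fun n => by simp only [hφr]; ring
    have hineq : βc * c - φr βc ≤ sr c := by
      refine le_of_forall_pos_le_add ?_
      intro ε hε
      have hnw : Tendsto (fun n => vm (γn (φ n))) atTop (𝓝[D] c) :=
        tendsto_nhdsWithin_iff.2 ⟨hconv, Eventually.of_forall fun n => hvmD _⟩
      have hev : ∀ᶠ n in atTop, sr (vm (γn (φ n))) < sr c + ε :=
        hnw (husr c hcD (sr c + ε) (by linarith))
      exact le_of_tendsto hsrconv (hev.mono fun n hn => le_of_lt hn)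
    refine ⟨c, hcD, fun w hw => ?_, φ, hφm, hconv⟩
    have h1 := hvmin βc w hw
    have h2 : φr βc = βc * vm βc - sr (vm βc) := by simp only [hφr]
    linarith
  -- build the two sequences and extract the two minimizers
  have htend : Tendsto (fun n : ℕ => 1 / ((n:ℝ) + 1)) atTop (𝓝 0) :=
    tendsto_one_div_add_atTop_nhds_zero_nat
  have hγp : Tendsto (fun n : ℕ => βc + 1 / ((n:ℝ) + 1)) atTop (𝓝 βc) := by
    have := Tendsto.add (tendsto_const_nhds : Tendsto (fun _ : ℕ => βc) atTop (𝓝 βc)) htend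
    simpa using this
  have hγm : Tendsto (fun n : ℕ => βc - 1 / ((n:ℝ) + 1)) atTop (𝓝 βc) := by
    have := Tendsto.sub (tendsto_const_nhds : Tendsto (fun _ : ℕ => βc) atTop (𝓝 βc)) htend
    simpa using this
  obtain ⟨c₁, hc₁D, hmin₁, φ₁, hφ₁m, hφ₁c⟩ := hcluster _ hγp
  obtain ⟨c₂, hc₂D, hmin₂, φ₂, hφ₂m, hφ₂c⟩ := hcluster _ hγm
  have hc₁le : c₁ ≤ u₀ := by
    refine le_of_tendsto hφ₁c (Eventually.of_forall fun n => ?_)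
    have ht : (0:ℝ) < 1 / ((φ₁ n : ℝ) + 1) := by positivity
    have hs := hside (βc + 1 / ((φ₁ n : ℝ) + 1))
    nlinarith
  have hc₂ge : u₀ ≤ c₂ := by
    refine ge_of_tendsto hφ₂c (Eventually.of_forall fun n => ?_)
    have ht : (0:ℝ) < 1 / ((φ₂ n : ℝ) + 1) := by positivity
    have hs := hside (βc - 1 / ((φ₂ n : ℝ) + 1))
    nlinarith
  by_cases hcc : c₁ = c₂
  · -- then c₁ = u₀ = c₂ and u₀ itself is a minimizer: contradiction with hnc
    exfalso
    have hu₀c : c₁ = u₀ := le_antisymm hc₁le (by rw [hcc]; exact hc₂ge)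
    have hu₀D : u₀ ∈ D := by rw [← hu₀c]; exact hc₁D
    have e1 : βc * u₀ - sr u₀ ≤ φr βc := by
      have := hmin₁ (vm βc) (hvmD βc)
      rw [hu₀c] at this
      have h2 : φr βc = βc * vm βc - sr (vm βc) := by simp only [hφr]
      linarith
    have e2 : φr βc ≤ βc * u₀ - sr u₀ := hvmin βc u₀ hu₀D
    have hxru : sr u₀ < xr := by
      have := hxr1
      rw [hsrD u₀ hu₀D] at this
      exact_mod_cast this
    have := hxr2 βc
    have hhβ : h βc = βc * u₀ - φr βc := by simp only [hh]
    linarith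
  · refine ⟨βc, c₁, c₂, hcc, hc₁D, hc₂D, ?_, ?_⟩
    · intro v
      rw [hsrD c₁ hc₁D, ← EReal.coe_sub]
      by_cases hv : v ∈ D
      · rw [hsrD v hv, ← EReal.coe_sub, EReal.coe_le_coe_iff]
        exact hmin₁ v hv
      · rw [not_not.1 hv, EReal.coe_sub_bot]
        exact le_top
    · intro v
      rw [hsrD c₂ hc₂D, ← EReal.coe_sub]
      by_cases hv : v ∈ D
      · rw [hsrD v hv, ← EReal.coe_sub, EReal.coe_le_coe_iff]
        exact hmin₂ v hv
      · rw [not_not.1 hv, EReal.coe_sub_bot]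
        exact le_top
end

section
/- Let Ω be a standard Borel space, P a probability measure on Ω, h : Ω → ℝ measurable, and g : ℝ → (0,∞) measurable with ∫ g(h(ω)) dP(ω) = 1, and let Q be the probability measure with density g ∘ h with respect to P. Then the regular conditional distributions given h coincide: for (Q ∘ h⁻¹)-almost every u ∈ ℝ, Q(· | h = u) = P(· | h = u). Consequently, for every measurable M : Ω → ℝ^d and every Borel set A ⊆ ℝ^d, Q{M ∈ A} = ∫_ℝ P{M ∈ A | h = u} (Q ∘ h⁻¹)(du); that is, the tilted (canonical-type) ensemble is a mixture of the conditioned (microcanonical-type) ensembles of the prior, weighted by the law of h under the tilted measure. -/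
/-!
Both `κP` and `κQ` disintegrate `Q` along `h`: for `κP` this is because the density `g ∘ h` of
`Q` is a function of `h`, so it factors out of each fibre and tilts only the law of `h`. Hence
`Q.map (h, id) = Q.map h ⊗ₘ κP = Q.map h ⊗ₘ κQ`, and a finite kernel is determined
`Q.map h`-a.e. by its composition-product. The mixture formula is the disintegration identity for
`κP` over `B = univ`.
-/

open MeasureTheory Set ProbabilityTheory
open scoped ENNReal

namespace ProbabilityTheory

variable {Ω β : Type*} {mΩ : MeasurableSpace Ω} {mβ : MeasurableSpace β}

def IsDisintegration (μ : Measure Ω) (h : Ω → β) (κ : Kernel β Ω) : Prop :=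
  ∀ (A : Set Ω) (B : Set β), MeasurableSet A → MeasurableSet B →
    μ (A ∩ h ⁻¹' B) = ∫⁻ u in B, κ u A ∂(μ.map h)

lemma _root_.MeasureTheory.Measure.map_withDensity_comp {μ : Measure Ω} {h : Ω → β}
    {f : β → ℝ≥0∞} (hh : Measurable h) (hf : Measurable f) :
    (μ.withDensity fun ω => f (h ω)).map h = (μ.map h).withDensity f := by
  ext B hB
  rw [Measure.map_apply hh hB, withDensity_apply _ (hh hB), withDensity_apply _ hB,
    setLIntegral_map hB hf hh]

namespace IsDisintegration

variable {μ : Measure Ω} {h : Ω → β} {κ : Kernel β Ω}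

lemma measure_eq_lintegral (hκ : IsDisintegration μ h κ) {A : Set Ω} (hA : MeasurableSet A) :
    μ A = ∫⁻ u, κ u A ∂(μ.map h) := by
  simpa using hκ A univ hA .univ

lemma map_restrict (hκ : IsDisintegration μ h κ) (hh : Measurable h) {A : Set Ω}
    (hA : MeasurableSet A) : (μ.restrict A).map h = (μ.map h).withDensity fun u => κ u A := by
  ext B hB
  rw [Measure.map_apply hh hB, Measure.restrict_apply (hh hB), inter_comm, hκ A B hA hB,
    withDensity_apply _ hB]

lemma withDensity_comp (hκ : IsDisintegration μ h κ) (hh : Measurable h) {f : β → ℝ≥0∞}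
    (hf : Measurable f) : IsDisintegration (μ.withDensity fun ω => f (h ω)) h κ := by
  intro A B hA hB
  have hκA : Measurable fun u => κ u A := κ.measurable_coe hA
  calc (μ.withDensity fun ω => f (h ω)) (A ∩ h ⁻¹' B)
      = ∫⁻ u in B, f u ∂(μ.restrict A).map h := by
        rw [withDensity_apply _ (hA.inter (hh hB)), inter_comm,
          ← Measure.restrict_restrict (hh hB), setLIntegral_map hB hf hh]
    _ = ∫⁻ u in B, f u * κ u A ∂(μ.map h) := by
        rw [hκ.map_restrict hh hA, restrict_withDensity hB,
          lintegral_withDensity_eq_lintegral_mul _ hκA hf]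
        simp only [Pi.mul_apply, mul_comm]
    _ = ∫⁻ u in B, κ u A ∂(μ.withDensity fun ω => f (h ω)).map h := by
        rw [Measure.map_withDensity_comp hh hf, restrict_withDensity hB,
          lintegral_withDensity_eq_lintegral_mul _ hf hκA]
        rfl

lemma map_prodMk_eq_compProd [IsFiniteMeasure μ] [IsSFiniteKernel κ]
    (hκ : IsDisintegration μ h κ) (hh : Measurable h) :
    μ.map (fun ω => (h ω, ω)) = μ.map h ⊗ₘ κ := by
  have hmk : Measurable fun ω => (h ω, ω) := hh.prodMk measurable_id
  refine Measure.ext_prod fun {B A} hB hA => ?_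
  rw [Measure.compProd_apply_prod hB hA, ← hκ A B hA hB, Measure.map_apply hmk (hB.prod hA)]
  congr 1
  ext ω
  simp [and_comm]

lemma ae_eq [IsFiniteMeasure μ] [MeasurableSpace.CountableOrCountablyGenerated β Ω]
    {η : Kernel β Ω} [IsFiniteKernel κ] [IsFiniteKernel η] (hh : Measurable h)
    (hκ : IsDisintegration μ h κ) (hη : IsDisintegration μ h η) : κ =ᵐ[μ.map h] η :=
  Kernel.ae_eq_of_compProd_eq
    ((hκ.map_prodMk_eq_compProd hh).symm.trans (hη.map_prodMk_eq_compProd hh))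

end IsDisintegration

end ProbabilityTheory

theorem tilted_measure_is_mixture_of_conditioned_prior_general
    {Ω : Type*} [MeasurableSpace Ω] [StandardBorelSpace Ω] {d : ℕ}
    (P : Measure Ω)
    (h : Ω → ℝ) (hh : Measurable h)
    (g : ℝ → ℝ) (hg : Measurable g)
    (hnorm : ∫⁻ ω, ENNReal.ofReal (g (h ω)) ∂P = 1)
    (Q : Measure Ω) (hQ : Q = P.withDensity fun ω => ENNReal.ofReal (g (h ω)))
    (κP κQ : Kernel ℝ Ω) [IsMarkovKernel κP] [IsMarkovKernel κQ]
    (hκP : ∀ (A : Set Ω) (B : Set ℝ), MeasurableSet A → MeasurableSet B →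
      P (A ∩ h ⁻¹' B) = ∫⁻ u in B, κP u A ∂(P.map h))
    (hκQ : ∀ (A : Set Ω) (B : Set ℝ), MeasurableSet A → MeasurableSet B →
      Q (A ∩ h ⁻¹' B) = ∫⁻ u in B, κQ u A ∂(Q.map h)) :
    (∀ᵐ u ∂(Q.map h), κQ u = κP u) ∧
    ∀ (M : Ω → (Fin d → ℝ)), Measurable M → ∀ A : Set (Fin d → ℝ), MeasurableSet A →
      Q {ω | M ω ∈ A} = ∫⁻ u, κP u {ω | M ω ∈ A} ∂(Q.map h) := by
  have : IsProbabilityMeasure Q :=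
    ⟨by rw [hQ, withDensity_apply _ .univ, Measure.restrict_univ, hnorm]⟩
  have hκPQ : IsDisintegration Q h κP :=
    hQ ▸ IsDisintegration.withDensity_comp hκP hh (f := fun u => ENNReal.ofReal (g u)) hg.ennreal_ofReal
  exact ⟨IsDisintegration.ae_eq hh hκQ hκPQ,
    fun M hM A hA => hκPQ.measure_eq_lintegral (hM hA)⟩

theorem tilted_measure_is_mixture_of_conditioned_prior
    {Ω : Type*} [MeasurableSpace Ω] [StandardBorelSpace Ω] [Nonempty Ω] {d : ℕ}
    (P : Measure Ω) [IsProbabilityMeasure P]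
    (h : Ω → ℝ) (hh : Measurable h)
    (g : ℝ → ℝ) (hg : Measurable g) (hgpos : ∀ u : ℝ, 0 < g u)
    (hnorm : ∫⁻ ω, ENNReal.ofReal (g (h ω)) ∂P = 1)
    (Q : Measure Ω) (hQ : Q = P.withDensity fun ω => ENNReal.ofReal (g (h ω)))
    (κP κQ : Kernel ℝ Ω) [IsMarkovKernel κP] [IsMarkovKernel κQ]
    (hκP : ∀ (A : Set Ω) (B : Set ℝ), MeasurableSet A → MeasurableSet B →
      P (A ∩ h ⁻¹' B) = ∫⁻ u in B, κP u A ∂(P.map h))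
    (hκQ : ∀ (A : Set Ω) (B : Set ℝ), MeasurableSet A → MeasurableSet B →
      Q (A ∩ h ⁻¹' B) = ∫⁻ u in B, κQ u A ∂(Q.map h)) :
    (∀ᵐ u ∂(Q.map h), κQ u = κP u) ∧
    ∀ (M : Ω → (Fin d → ℝ)), Measurable M → ∀ A : Set (Fin d → ℝ), MeasurableSet A →
      Q {ω | M ω ∈ A} = ∫⁻ u, κP u {ω | M ω ∈ A} ∂(Q.map h) :=
  tilted_measure_is_mixture_of_conditioned_prior_general P h hh g hg hnorm Q hQ κP κQ hκP hκQ
end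

section
/- Fix u, β ∈ ℝ. Assume: (i) φ(β) = lim_{N→∞} −(1/N) ln Z_N(β) exists and is finite; (ii) there is r₀ > 0 such that for every 0 < r ≤ r₀, P_N{h_N ∈ [u−r, u+r]} > 0 for all N, the limit L(r) = lim_{N→∞} (1/N) ln P_N{h_N ∈ [u−r, u+r]} exists and is finite, and L(r) → s(u) ∈ ℝ as r → 0⁺. Then the specific relative entropy exists and equals d_β^u := lim_{r→0⁺} limsup_{N→∞} (1/N) D(P_N^{u,r} ‖ P_{N,β}) = lim_{r→0⁺} liminf_{N→∞} (1/N) D(P_N^{u,r} ‖ P_{N,β}) = β u − s(u) − φ(β). -/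
/-!
On the energy shell `A = {h_N ∈ [u-r, u+r]}` the density of `P_N^{u,r}` with respect to
`P_{N,β}` is the constant-times-Boltzmann factor `Z_N(β) e^{βN h_N} / P_N(A)`, so
`D(P_N^{u,r} ‖ P_{N,β}) = ln Z_N(β) - ln P_N(A) + βN ⟨h_N⟩`, where the mean energy `⟨h_N⟩`
under `P_N^{u,r}` lies in `[u-r, u+r]`. Hence both `limsup` and `liminf` of
`(1/N) D(P_N^{u,r} ‖ P_{N,β})` lie within `|β| r` of `β u - L(r) - φ(β)`, and letting `r → 0⁺`
gives the claim.
-/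

open MeasureTheory Filter Set Topology
open scoped ENNReal

variable {Ω : ℕ → Type*} [∀ N, MeasurableSpace (Ω N)]

/-- Partition function of the canonical ensemble at inverse temperature `β`. -/
noncomputable def canZ (P : ∀ N, Measure (Ω N)) (h : ∀ N, Ω N → ℝ) (β : ℝ) (N : ℕ) : ℝ≥0∞ :=
  ∫⁻ ω, ENNReal.ofReal (Real.exp (-(β * (N : ℝ) * h N ω))) ∂(P N)

/-- The canonical ensemble `P_{N,β} = Z_N(β)⁻¹ e^{-βNh_N} P_N`. -/
noncomputable def canMeasure (P : ∀ N, Measure (Ω N)) (h : ∀ N, Ω N → ℝ) (β : ℝ) (N : ℕ) :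
    Measure (Ω N) :=
  (canZ P h β N)⁻¹ •
    (P N).withDensity fun ω => ENNReal.ofReal (Real.exp (-(β * (N : ℝ) * h N ω)))

/-- The microcanonical ensemble `P_N^{u,r} = P_N(· | h_N ∈ [u-r,u+r])`. -/
noncomputable def microMeasure (P : ∀ N, Measure (Ω N)) (h : ∀ N, Ω N → ℝ) (u r : ℝ)
    (N : ℕ) : Measure (Ω N) :=
  ProbabilityTheory.cond (P N) {ω | h N ω ∈ Set.Icc (u - r) (u + r)}

/-- Relative entropy `D(P_N^{u,r} ‖ P_{N,β}) = ∫ ln (dP_N^{u,r}/dP_{N,β}) dP_N^{u,r}`. -/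
noncomputable def relEnt (P : ∀ N, Measure (Ω N)) (h : ∀ N, Ω N → ℝ) (β u r : ℝ)
    (N : ℕ) : ℝ :=
  ∫ ω, Real.log (((microMeasure P h u r N).rnDeriv (canMeasure P h β N) ω).toReal)
    ∂(microMeasure P h u r N)

section Approximation

variable {ι : Type*} {F : Filter ι} [F.NeBot] {a b : ι → ℝ} {x ε : ℝ}

lemma abs_limsup_sub_le_and_abs_liminf_sub_le (hb : Tendsto b F (𝓝 x))
    (hab : ∀ᶠ i in F, |a i - b i| ≤ ε) :
    |limsup a F - x| ≤ ε ∧ |liminf a F - x| ≤ ε := by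
  have hupper : ∀ᶠ i in F, a i ≤ b i + ε :=
    hab.mono fun i hi => by linarith [le_abs_self (a i - b i)]
  have hlower : ∀ᶠ i in F, b i - ε ≤ a i :=
    hab.mono fun i hi => by linarith [neg_abs_le (a i - b i)]
  have hhi : Tendsto (fun i => b i + ε) F (𝓝 (x + ε)) := hb.add_const ε
  have hlo : Tendsto (fun i => b i - ε) F (𝓝 (x - ε)) := hb.sub_const ε
  have hbddAbove : IsBoundedUnder (· ≤ ·) F a := hhi.isBoundedUnder_le.mono_le hupper
  have hbddBelow : IsBoundedUnder (· ≥ ·) F a := hlo.isBoundedUnder_ge.mono_ge hlower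
  have hlimsup_le : limsup a F ≤ x + ε := hhi.limsup_eq ▸
    limsup_le_limsup hupper hbddBelow.isCoboundedUnder_le hhi.isBoundedUnder_le
  have hle_liminf : x - ε ≤ liminf a F := hlo.liminf_eq ▸
    liminf_le_liminf hlower hlo.isBoundedUnder_ge hbddAbove.isCoboundedUnder_ge
  have hliminf_le_limsup : liminf a F ≤ limsup a F := liminf_le_limsup hbddAbove hbddBelow
  exact ⟨abs_sub_le_iff.2 ⟨by linarith, by linarith⟩, abs_sub_le_iff.2 ⟨by linarith, by linarith⟩⟩

lemma Filter.Tendsto.of_eventually_abs_sub_le {l : Filter ι} {f g δ : ι → ℝ}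
    (hg : Tendsto g l (𝓝 x)) (hδ : Tendsto δ l (𝓝 0)) (hfg : ∀ᶠ i in l, |f i - g i| ≤ δ i) :
    Tendsto f l (𝓝 x) :=
  hg.congr_dist <| squeeze_zero' (.of_forall fun _ => dist_nonneg)
    (hfg.mono fun i hi => by rwa [dist_comm, Real.dist_eq]) hδ

end Approximation

section FixedSize

variable (P : ∀ N, Measure (Ω N)) (h : ∀ N, Ω N → ℝ) (β u r : ℝ) (N : ℕ)

lemma isProbabilityMeasure_canMeasure (hZ0 : canZ P h β N ≠ 0) (hZt : canZ P h β N ≠ ∞) :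
    IsProbabilityMeasure (canMeasure P h β N) := by
  constructor
  rw [canMeasure, Measure.smul_apply, withDensity_apply _ MeasurableSet.univ,
    Measure.restrict_univ, smul_eq_mul]
  exact ENNReal.inv_mul_cancel hZ0 hZt

lemma microMeasure_eq_withDensity_canMeasure (hmeas : Measurable (h N))
    (hZ0 : canZ P h β N ≠ 0) (hZt : canZ P h β N ≠ ∞) :
    microMeasure P h u r N = (canMeasure P h β N).withDensity
      ({ω | h N ω ∈ Icc (u - r) (u + r)}.indicator fun ω =>
        (P N {ω | h N ω ∈ Icc (u - r) (u + r)})⁻¹ * canZ P h β N *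
          ENNReal.ofReal (Real.exp (β * N * h N ω))) := by
  set A := {ω | h N ω ∈ Icc (u - r) (u + r)}
  set c := (P N A)⁻¹ * canZ P h β N
  have hA : MeasurableSet A := hmeas measurableSet_Icc
  have hboltzmann : (fun ω => ENNReal.ofReal (Real.exp (-(β * N * h N ω)))) *
      A.indicator (fun ω => c * ENNReal.ofReal (Real.exp (β * N * h N ω))) =
      A.indicator fun _ => c := by
    funext ω
    by_cases hω : ω ∈ A
    · rw [Pi.mul_apply, indicator_of_mem hω, indicator_of_mem hω, mul_left_comm,
        ← ENNReal.ofReal_mul (Real.exp_nonneg _), ← Real.exp_add, neg_add_cancel, Real.exp_zero,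
        ENNReal.ofReal_one, mul_one]
    · simp [indicator_of_notMem hω]
  rw [canMeasure, withDensity_smul_measure,
    ← withDensity_mul _ (by fun_prop) ((by fun_prop : Measurable _).indicator hA), hboltzmann,
    withDensity_indicator hA, withDensity_const, smul_smul, microMeasure,
    ProbabilityTheory.cond, mul_left_comm, ENNReal.inv_mul_cancel hZ0 hZt, mul_one]

lemma log_rnDeriv_microMeasure_canMeasure [IsFiniteMeasure (P N)] (hmeas : Measurable (h N))
    (hZ0 : canZ P h β N ≠ 0) (hZt : canZ P h β N ≠ ∞)
    (hA0 : P N {ω | h N ω ∈ Icc (u - r) (u + r)} ≠ 0) :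
    ∀ᵐ ω ∂(microMeasure P h u r N),
      Real.log (((microMeasure P h u r N).rnDeriv (canMeasure P h β N) ω).toReal) =
        Real.log (canZ P h β N).toReal -
          Real.log (P N {ω | h N ω ∈ Icc (u - r) (u + r)}).toReal + β * N * h N ω := by
  set A := {ω | h N ω ∈ Icc (u - r) (u + r)}
  have hA : MeasurableSet A := hmeas measurableSet_Icc
  set f := A.indicator fun ω =>
    (P N A)⁻¹ * canZ P h β N * ENNReal.ofReal (Real.exp (β * N * h N ω)) with hf
  have hdensity : microMeasure P h u r N = (canMeasure P h β N).withDensity f :=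
    microMeasure_eq_withDensity_canMeasure P h β u r N hmeas hZ0 hZt
  have := isProbabilityMeasure_canMeasure P h β N hZ0 hZt
  have hac : microMeasure P h u r N ≪ canMeasure P h β N :=
    hdensity ▸ withDensity_absolutelyContinuous _ _
  have hrnDeriv : (microMeasure P h u r N).rnDeriv (canMeasure P h β N)
      =ᵐ[microMeasure P h u r N] f :=
    hac.ae_le (hdensity ▸ Measure.rnDeriv_withDensity _ ((by fun_prop : Measurable _).indicator hA))
  filter_upwards [hrnDeriv, ProbabilityTheory.ae_cond_mem hA] with ω hω hωA
  have hPA : 0 < (P N A).toReal := ENNReal.toReal_pos hA0 (measure_ne_top _ _)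
  have hZ : 0 < (canZ P h β N).toReal := ENNReal.toReal_pos hZ0 hZt
  rw [hω, hf, indicator_of_mem (s := A) hωA, ENNReal.toReal_mul, ENNReal.toReal_mul,
    ENNReal.toReal_inv, ENNReal.toReal_ofReal (Real.exp_nonneg _),
    Real.log_mul (by positivity) (Real.exp_ne_zero _),
    Real.log_mul (by positivity) hZ.ne', Real.log_inv, Real.log_exp]
  ring

lemma integrable_microMeasure (hmeas : Measurable (h N)) :
    Integrable (h N) (microMeasure P h u r N) := by
  have : IsZeroOrProbabilityMeasure (microMeasure P h u r N) := by
    unfold microMeasure; infer_instance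
  refine .of_bound hmeas.aestronglyMeasurable (max |u - r| |u + r|) ?_
  filter_upwards [ProbabilityTheory.ae_cond_mem (hmeas measurableSet_Icc)] with ω hω
  exact abs_le_max_abs_abs hω.1 hω.2

lemma integral_microMeasure_mem_Icc [IsFiniteMeasure (P N)] (hmeas : Measurable (h N))
    (hA0 : P N {ω | h N ω ∈ Icc (u - r) (u + r)} ≠ 0) :
    ∫ ω, h N ω ∂(microMeasure P h u r N) ∈ Icc (u - r) (u + r) := by
  have : IsProbabilityMeasure (microMeasure P h u r N) :=
    ProbabilityTheory.cond_isProbabilityMeasure hA0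
  exact (convex_Icc _ _).integral_mem isClosed_Icc
    (ProbabilityTheory.ae_cond_mem (hmeas measurableSet_Icc))
    (integrable_microMeasure P h u r N hmeas)

lemma relEnt_eq [IsFiniteMeasure (P N)] (hmeas : Measurable (h N))
    (hZ0 : canZ P h β N ≠ 0) (hZt : canZ P h β N ≠ ∞)
    (hA0 : P N {ω | h N ω ∈ Icc (u - r) (u + r)} ≠ 0) :
    relEnt P h β u r N = Real.log (canZ P h β N).toReal -
      Real.log (P N {ω | h N ω ∈ Icc (u - r) (u + r)}).toReal +
        β * N * ∫ ω, h N ω ∂(microMeasure P h u r N) := by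
  have : IsProbabilityMeasure (microMeasure P h u r N) :=
    ProbabilityTheory.cond_isProbabilityMeasure hA0
  rw [relEnt,
    integral_congr_ae (log_rnDeriv_microMeasure_canMeasure P h β u r N hmeas hZ0 hZt hA0),
    integral_add (integrable_const _) ((integrable_microMeasure P h u r N hmeas).const_mul _),
    integral_const, probReal_univ, one_smul, integral_const_mul]

lemma abs_inv_mul_relEnt_sub_le [IsFiniteMeasure (P N)] (hmeas : Measurable (h N))
    (hZ0 : canZ P h β N ≠ 0) (hZt : canZ P h β N ≠ ∞)
    (hA0 : P N {ω | h N ω ∈ Icc (u - r) (u + r)} ≠ 0) (hN : N ≠ 0) :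
    |(N : ℝ)⁻¹ * relEnt P h β u r N - ((N : ℝ)⁻¹ * Real.log (canZ P h β N).toReal -
      (N : ℝ)⁻¹ * Real.log (P N {ω | h N ω ∈ Icc (u - r) (u + r)}).toReal + β * u)| ≤ |β| * r := by
  obtain ⟨hlo, hhi⟩ := integral_microMeasure_mem_Icc P h u r N hmeas hA0
  rw [relEnt_eq P h β u r N hmeas hZ0 hZt hA0]
  have hN' : (N : ℝ) ≠ 0 := Nat.cast_ne_zero.2 hN
  calc _ = |β| * |∫ ω, h N ω ∂(microMeasure P h u r N) - u| := by
        rw [← abs_mul]; congr 1; field_simp; ring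
    _ ≤ |β| * r := by gcongr; exact abs_sub_le_iff.2 ⟨by linarith, by linarith⟩

end FixedSize

theorem specific_relative_entropy_eq_canonical_rate
    (P : ∀ N, Measure (Ω N)) [∀ N, IsProbabilityMeasure (P N)]
    (h : ∀ N, Ω N → ℝ) (hmeas : ∀ N, Measurable (h N))
    (β u : ℝ)
    (hZfin : ∀ N, 0 < canZ P h β N ∧ canZ P h β N ≠ ∞)
    (φβ : ℝ)
    (hφ : Tendsto (fun N : ℕ => -((N : ℝ)⁻¹ * Real.log ((canZ P h β N).toReal)))
      atTop (𝓝 φβ))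
    (r₀ : ℝ) (hr₀ : 0 < r₀)
    (hp : ∀ r ∈ Set.Ioc (0 : ℝ) r₀, ∀ N,
      0 < P N {ω | h N ω ∈ Set.Icc (u - r) (u + r)})
    (L : ℝ → ℝ)
    (hL : ∀ r ∈ Set.Ioc (0 : ℝ) r₀,
      Tendsto (fun N : ℕ =>
          (N : ℝ)⁻¹ * Real.log ((P N {ω | h N ω ∈ Set.Icc (u - r) (u + r)}).toReal))
        atTop (𝓝 (L r)))
    (su : ℝ) (hLs : Tendsto L (𝓝[>] 0) (𝓝 su)) :
    Tendsto (fun r : ℝ => limsup (fun N : ℕ => (N : ℝ)⁻¹ * relEnt P h β u r N) atTop)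
      (𝓝[>] 0) (𝓝 (β * u - su - φβ)) ∧
    Tendsto (fun r : ℝ => liminf (fun N : ℕ => (N : ℝ)⁻¹ * relEnt P h β u r N) atTop)
      (𝓝[>] 0) (𝓝 (β * u - su - φβ)) := by
  have hZ : Tendsto (fun N : ℕ => (N : ℝ)⁻¹ * Real.log (canZ P h β N).toReal) atTop
      (𝓝 (-φβ)) := by simpa using hφ.neg
  have hnear : ∀ r ∈ Ioc (0 : ℝ) r₀,
      |limsup (fun N : ℕ => (N : ℝ)⁻¹ * relEnt P h β u r N) atTop - (β * u - L r - φβ)|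
        ≤ |β| * r ∧
      |liminf (fun N : ℕ => (N : ℝ)⁻¹ * relEnt P h β u r N) atTop - (β * u - L r - φβ)|
        ≤ |β| * r := by
    intro r hr
    have hrate : Tendsto (fun N : ℕ => (N : ℝ)⁻¹ * Real.log (canZ P h β N).toReal -
        (N : ℝ)⁻¹ * Real.log (P N {ω | h N ω ∈ Icc (u - r) (u + r)}).toReal + β * u) atTop
        (𝓝 (β * u - L r - φβ)) := by
      convert (hZ.sub (hL r hr)).add_const (β * u) using 2
      ring
    refine abs_limsup_sub_le_and_abs_liminf_sub_le hrate ?_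
    filter_upwards [eventually_ne_atTop 0] with N hN
    exact abs_inv_mul_relEnt_sub_le P h β u r N (hmeas N) (hZfin N).1.ne' (hZfin N).2
      (hp r hr N).ne' hN
  have hcenter : Tendsto (fun r => β * u - L r - φβ) (𝓝[>] 0) (𝓝 (β * u - su - φβ)) :=
    (hLs.const_sub _).sub_const _
  have hwidth : Tendsto (fun r : ℝ => |β| * r) (𝓝[>] 0) (𝓝 0) := by
    simpa using ((continuous_const_mul |β|).tendsto 0).mono_left nhdsWithin_le_nhds
  have hsmall : ∀ᶠ r in 𝓝[>] (0 : ℝ), r ∈ Ioc 0 r₀ := Ioc_mem_nhdsGT hr₀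
  exact ⟨hcenter.of_eventually_abs_sub_le hwidth (hsmall.mono fun r hr => (hnear r hr).1),
    hcenter.of_eventually_abs_sub_le hwidth (hsmall.mono fun r hr => (hnear r hr).2)⟩
end

section
/- Under the ensemble setting, suppose Z_N(β) ∈ (0,∞) and p_N(r) = P_N{h_N ∈ [u−r, u+r]} > 0. Then for P_N^{u,r}-almost every ω, (1/N) ln (dP_N^{u,r}/dP_{N,β})(ω) = β h_N(ω) + (1/N) ln Z_N(β) − (1/N) ln p_N(r), and hence |(1/N) ln (dP_N^{u,r}/dP_{N,β})(ω) − (β u + (1/N) ln Z_N(β) − (1/N) ln p_N(r))| ≤ |β| r for P_N^{u,r}-almost every ω. Consequently, if φ(β) = lim_N −(1/N) ln Z_N(β) exists and is finite, and (1/N) ln p_N(r) → L(r) as N → ∞ with L(r) → s(u) ∈ ℝ as r → 0⁺, then lim_{r→0⁺} limsup_{N→∞} esssup_{P_N^{u,r}} |(1/N) ln (dP_N^{u,r}/dP_{N,β}) − (β u − s(u) − φ(β))| = 0; i.e., the specific action converges P_N^{u,r}-a.e., uniformly, to J_β(u) = β u − s(u) − φ(β). -/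
/-!
On the shell `S = {h_N ∈ [u - r, u + r]}` we have `P_N^{u,r} = p_N(r)⁻¹ 1_S P_N` and
`P_N = Z_N(β) e^{βNh_N} P_{N,β}`, so `dP_N^{u,r}/dP_{N,β} = p_N(r)⁻¹ Z_N(β) e^{βNh_N}`
holds `P_N^{u,r}`-a.e.; its logarithm gives the exact formula, and `h_N ∈ [u - r, u + r]` a.e.
bounds the deviation by `|β| r`. The essential supremum is thus at most `|β| r` plus the errors
of the two normalising terms, which tend to `|s(u) - L(r)|` as `N → ∞` and then to `0` as
`r → 0⁺`.
-/

open MeasureTheory Filter Set Topology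
open scoped ENNReal

variable {Ω : ℕ → Type*} [∀ N, MeasurableSpace (Ω N)]

/-- The specific action `(1/N) ln (dP_N^{u,r}/dP_{N,β})`. -/
noncomputable def specificAction (P : ∀ N, Measure (Ω N)) (h : ∀ N, Ω N → ℝ) (β u r : ℝ)
    (N : ℕ) (ω : Ω N) : ℝ :=
  (N : ℝ)⁻¹ *
    Real.log (((microMeasure P h u r N).rnDeriv (canMeasure P h β N) ω).toReal)

open ProbabilityTheory

theorem MeasureTheory.SigmaFinite.smul_of_ne_top {α : Type*} [MeasurableSpace α] {μ : Measure α}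
    [SigmaFinite μ] {c : ℝ≥0∞} (hc : c ≠ ∞) : SigmaFinite (c • μ) := by
  rw [← ENNReal.coe_toNNReal hc]
  exact SMul.sigmaFinite c.toNNReal

section Gibbs

variable {α : Type*} [MeasurableSpace α] {μ : Measure α} {H : α → ℝ}

theorem withDensity_exp_neg_withDensity_exp (hH : Measurable H) :
    (μ.withDensity fun x => ENNReal.ofReal (Real.exp (-H x))).withDensity
      (fun x => ENNReal.ofReal (Real.exp (H x))) = μ := by
  rw [← withDensity_mul μ (by fun_prop) (by fun_prop)]
  convert withDensity_one (μ := μ)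
  ext x
  rw [Pi.mul_apply, ← ENNReal.ofReal_mul (Real.exp_nonneg _), ← Real.exp_add, neg_add_cancel,
    Real.exp_zero, ENNReal.ofReal_one, Pi.one_apply]

theorem cond_eq_withDensity_gibbs (hH : Measurable H) {S : Set α} (hS : MeasurableSet S)
    {Z : ℝ≥0∞} (hZ0 : Z ≠ 0) (hZ : Z ≠ ∞) :
    μ[|S] = (Z⁻¹ • μ.withDensity fun x => ENNReal.ofReal (Real.exp (-H x))).withDensity
      (((μ S)⁻¹ * Z) • S.indicator fun x => ENNReal.ofReal (Real.exp (H x))) := by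
  rw [withDensity_smul_measure, withDensity_smul _ ((by fun_prop : Measurable _).indicator hS),
    withDensity_indicator hS, ← restrict_withDensity hS, withDensity_exp_neg_withDensity_exp hH,
    smul_smul, mul_left_comm, ENNReal.inv_mul_cancel hZ0 hZ, mul_one, ProbabilityTheory.cond]

theorem rnDeriv_cond_gibbs_ae [SigmaFinite μ] (hH : Measurable H) {S : Set α}
    (hS : MeasurableSet S) {Z : ℝ≥0∞} (hZ0 : Z ≠ 0) (hZ : Z ≠ ∞) :
    ∀ᵐ x ∂μ[|S],
      μ[|S].rnDeriv (Z⁻¹ • μ.withDensity fun x => ENNReal.ofReal (Real.exp (-H x))) x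
        = (μ S)⁻¹ * Z * ENNReal.ofReal (Real.exp (H x)) := by
  set ν := Z⁻¹ • μ.withDensity fun x => ENNReal.ofReal (Real.exp (-H x))
  have : SigmaFinite ν :=
    have := SigmaFinite.withDensity_ofReal (μ := μ) fun x => Real.exp (-H x)
    SigmaFinite.smul_of_ne_top (ENNReal.inv_ne_top.2 hZ0)
  have hcond := cond_eq_withDensity_gibbs (μ := μ) hH hS hZ0 hZ
  have hac : μ[|S] ≪ ν := hcond ▸ withDensity_absolutelyContinuous _ _
  have hrn := Measure.rnDeriv_withDensity ν
    (((by fun_prop : Measurable fun x => ENNReal.ofReal (Real.exp (H x))).indicator hS).const_smul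
      ((μ S)⁻¹ * Z))
  rw [← hcond] at hrn
  filter_upwards [hac.ae_le hrn, ae_cond_mem hS] with x hx hxS
  simp [hx, indicator_of_mem hxS]

end Gibbs

theorem essSup_abs_sub_mem_Icc {α : Type*} [MeasurableSpace α] {μ : Measure α} [NeBot (ae μ)]
    {f : α → ℝ} {c b : ℝ} (hf : ∀ᵐ x ∂μ, |f x - c| ≤ b) (d : ℝ) :
    essSup (fun x => |f x - d|) μ ∈ Icc 0 (b + |c - d|) := by
  have hle : ∀ᵐ x ∂μ, |f x - d| ≤ b + |c - d| :=
    hf.mono fun x hx => (abs_sub_le _ c _).trans (by linarith)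
  have hnonneg : ∀ᶠ x in ae μ, 0 ≤ |f x - d| := .of_forall fun x => abs_nonneg _
  exact ⟨le_limsup_of_frequently_le hnonneg.frequently ⟨_, hle⟩,
    essSup_le_of_ae_le _ hle (isCoboundedUnder_le_of_eventually_le _ hnonneg)⟩

theorem limsup_mem_Icc_of_eventually_mem_Icc {ι : Type*} {l : Filter ι} [NeBot l]
    {f b : ι → ℝ} {a m : ℝ} (hfb : ∀ᶠ n in l, f n ∈ Icc a (b n)) (hb : Tendsto b l (𝓝 m)) :
    limsup f l ∈ Icc a m := by
  have hbdd : IsBoundedUnder (· ≤ ·) l f :=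
    hb.isBoundedUnder_le.mono_le (hfb.mono fun _ hn => hn.2)
  refine ⟨le_limsup_of_frequently_le (hfb.mono fun _ hn => hn.1).frequently hbdd, ?_⟩
  calc limsup f l ≤ limsup b l :=
        limsup_le_limsup (hfb.mono fun _ hn => hn.2)
          (isCoboundedUnder_le_of_eventually_le _ (hfb.mono fun _ hn => hn.1))
          hb.isBoundedUnder_le
    _ = m := hb.limsup_eq

theorem tendsto_limsup_of_eventually_mem_Icc {α ι : Type*} {l : Filter α} {l' : Filter ι}
    [NeBot l'] {F B : α → ι → ℝ} {M : α → ℝ} {a : ℝ}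
    (hF : ∀ᶠ r in l, ∀ᶠ n in l', F r n ∈ Icc a (B r n))
    (hB : ∀ᶠ r in l, Tendsto (B r) l' (𝓝 (M r))) (hM : Tendsto M l (𝓝 a)) :
    Tendsto (fun r => limsup (F r) l') l (𝓝 a) := by
  have hmem : ∀ᶠ r in l, limsup (F r) l' ∈ Icc a (M r) := by
    filter_upwards [hF, hB] with r hr hBr using limsup_mem_Icc_of_eventually_mem_Icc hr hBr
  exact tendsto_of_tendsto_of_tendsto_of_le_of_le' tendsto_const_nhds hM
    (hmem.mono fun _ h => h.1) (hmem.mono fun _ h => h.2)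

section Ensemble

variable {P : ∀ N, Measure (Ω N)} {h : ∀ N, Ω N → ℝ} {β u r : ℝ} {N : ℕ}

theorem ae_microMeasure_mem_Icc (hh : Measurable (h N)) :
    ∀ᵐ ω ∂microMeasure P h u r N, h N ω ∈ Icc (u - r) (u + r) :=
  ae_cond_mem (hh measurableSet_Icc)

theorem specificAction_ae_eq [IsFiniteMeasure (P N)] (hh : Measurable (h N)) (hN : N ≠ 0)
    (hZ0 : canZ P h β N ≠ 0) (hZ : canZ P h β N ≠ ∞)
    (hp : P N {ω | h N ω ∈ Icc (u - r) (u + r)} ≠ 0) :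
    ∀ᵐ ω ∂microMeasure P h u r N,
      specificAction P h β u r N ω
        = β * h N ω + (N : ℝ)⁻¹ * Real.log (canZ P h β N).toReal
          - (N : ℝ)⁻¹ * Real.log (P N {ω | h N ω ∈ Icc (u - r) (u + r)}).toReal := by
  have hp' : 0 < (P N {ω | h N ω ∈ Icc (u - r) (u + r)}).toReal :=
    ENNReal.toReal_pos hp (measure_ne_top _ _)
  have hZ' : 0 < (canZ P h β N).toReal := ENNReal.toReal_pos hZ0 hZ
  filter_upwards [rnDeriv_cond_gibbs_ae (μ := P N) (H := fun ω => β * N * h N ω)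
    (S := {ω | h N ω ∈ Icc (u - r) (u + r)}) (by fun_prop) (hh measurableSet_Icc) hZ0 hZ] with ω hω
  rw [specificAction, show (microMeasure P h u r N).rnDeriv (canMeasure P h β N) ω = _ from hω,
    ENNReal.toReal_mul, ENNReal.toReal_mul, ENNReal.toReal_inv,
    ENNReal.toReal_ofReal (Real.exp_nonneg _), Real.log_mul (by positivity) (Real.exp_pos _).ne',
    Real.log_mul (by positivity) hZ'.ne', Real.log_inv, Real.log_exp]
  field_simp
  ring

theorem abs_specificAction_sub_le_ae [IsFiniteMeasure (P N)] (hh : Measurable (h N))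
    (hN : N ≠ 0) (hZ0 : canZ P h β N ≠ 0) (hZ : canZ P h β N ≠ ∞)
    (hp : P N {ω | h N ω ∈ Icc (u - r) (u + r)} ≠ 0) :
    ∀ᵐ ω ∂microMeasure P h u r N,
      |specificAction P h β u r N ω
        - (β * u + (N : ℝ)⁻¹ * Real.log (canZ P h β N).toReal
          - (N : ℝ)⁻¹ * Real.log (P N {ω | h N ω ∈ Icc (u - r) (u + r)}).toReal)|
        ≤ |β| * r := by
  filter_upwards [specificAction_ae_eq hh hN hZ0 hZ hp, ae_microMeasure_mem_Icc hh]
    with ω hω hmem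
  rw [hω, show ∀ a b : ℝ, β * h N ω + a - b - (β * u + a - b) = β * (h N ω - u) by
    intros; ring, abs_mul, abs_sub_comm]
  exact mul_le_mul_of_nonneg_left (mem_Icc_iff_abs_le.mpr hmem) (abs_nonneg β)

end Ensemble

theorem specific_action_converges_to_canonical_rate
    (P : ∀ N, Measure (Ω N)) [∀ N, IsProbabilityMeasure (P N)]
    (h : ∀ N, Ω N → ℝ) (hmeas : ∀ N, Measurable (h N))
    (β u : ℝ)
    (hZfin : ∀ N, 0 < canZ P h β N ∧ canZ P h β N ≠ ∞) :
    (∀ N : ℕ, 0 < N → ∀ r : ℝ, 0 < r →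
      0 < P N {ω | h N ω ∈ Set.Icc (u - r) (u + r)} →
      ∀ᵐ ω ∂(microMeasure P h u r N),
        specificAction P h β u r N ω
          = β * h N ω + (N : ℝ)⁻¹ * Real.log ((canZ P h β N).toReal)
            - (N : ℝ)⁻¹ * Real.log ((P N {ω' | h N ω' ∈ Set.Icc (u - r) (u + r)}).toReal)) ∧
    (∀ N : ℕ, 0 < N → ∀ r : ℝ, 0 < r →
      0 < P N {ω | h N ω ∈ Set.Icc (u - r) (u + r)} →
      ∀ᵐ ω ∂(microMeasure P h u r N),
        |specificAction P h β u r N ω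
          - (β * u + (N : ℝ)⁻¹ * Real.log ((canZ P h β N).toReal)
            - (N : ℝ)⁻¹ * Real.log ((P N {ω' | h N ω' ∈ Set.Icc (u - r) (u + r)}).toReal))|
          ≤ |β| * r) ∧
    (∀ φβ : ℝ,
      Tendsto (fun N : ℕ => -((N : ℝ)⁻¹ * Real.log ((canZ P h β N).toReal))) atTop (𝓝 φβ) →
      ∀ r₀ : ℝ, 0 < r₀ →
      (∀ r ∈ Set.Ioc (0 : ℝ) r₀, ∀ N,
        0 < P N {ω | h N ω ∈ Set.Icc (u - r) (u + r)}) →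
      ∀ L : ℝ → ℝ,
      (∀ r ∈ Set.Ioc (0 : ℝ) r₀,
        Tendsto (fun N : ℕ =>
            (N : ℝ)⁻¹ * Real.log ((P N {ω | h N ω ∈ Set.Icc (u - r) (u + r)}).toReal))
          atTop (𝓝 (L r))) →
      ∀ su : ℝ, Tendsto L (𝓝[>] 0) (𝓝 su) →
      Tendsto (fun r : ℝ =>
          limsup (fun N : ℕ =>
            essSup (fun ω => |specificAction P h β u r N ω - (β * u - su - φβ)|)
              (microMeasure P h u r N)) atTop)
        (𝓝[>] 0) (𝓝 0)) := by
  have hZ0 N : canZ P h β N ≠ 0 := (hZfin N).1.ne'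
  refine ⟨fun N hN r _ hp => specificAction_ae_eq (hmeas N) hN.ne' (hZ0 N) (hZfin N).2 hp.ne',
    fun N hN r _ hp => abs_specificAction_sub_le_ae (hmeas N) hN.ne' (hZ0 N) (hZfin N).2 hp.ne',
    ?_⟩
  intro φβ hφ r₀ hr₀ hp L hL su hsu
  have hZlim : Tendsto (fun N : ℕ => (N : ℝ)⁻¹ * Real.log (canZ P h β N).toReal) atTop
      (𝓝 (-φβ)) := by
    simpa using hφ.neg
  refine tendsto_limsup_of_eventually_mem_Icc
    (B := fun r (N : ℕ) => |β| * r + |β * u + (N : ℝ)⁻¹ * Real.log (canZ P h β N).toReal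
      - (N : ℝ)⁻¹ * Real.log (P N {ω | h N ω ∈ Icc (u - r) (u + r)}).toReal - (β * u - su - φβ)|)
    (M := fun r => |β| * r + |β * u + -φβ - L r - (β * u - su - φβ)|) ?_ ?_ ?_
  · filter_upwards [Ioc_mem_nhdsGT hr₀] with r hr
    filter_upwards [eventually_gt_atTop 0] with N hN
    have : IsProbabilityMeasure (microMeasure P h u r N) :=
      cond_isProbabilityMeasure (hp r hr N).ne'
    exact essSup_abs_sub_mem_Icc
      (abs_specificAction_sub_le_ae (hmeas N) hN.ne' (hZ0 N) (hZfin N).2 (hp r hr N).ne') _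
  · filter_upwards [Ioc_mem_nhdsGT hr₀] with r hr
    exact tendsto_const_nhds.add
      (((tendsto_const_nhds.add hZlim).sub (hL r hr)).sub tendsto_const_nhds).abs
  · have hM : Tendsto (fun r => |β| * r + |β * u + -φβ - L r - (β * u - su - φβ)|) (𝓝[>] 0)
        (𝓝 (|β| * 0 + |β * u + -φβ - su - (β * u - su - φβ)|)) :=
      ((tendsto_nhdsWithin_of_tendsto_nhds tendsto_id).const_mul _).add
        ((tendsto_const_nhds.sub hsu).sub tendsto_const_nhds).abs
    rwa [mul_zero, zero_add, show β * u + -φβ - su - (β * u - su - φβ) = 0 by ring,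
      abs_zero] at hM
end
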